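/- arXiv:1701.01991 — 10 statements merged into one kernel-verified Lean document; each statement's English description precedes it below -/
import Mathlib

section
/- Let A be the k-algebra generated by g, h, x with relations g^4 = 1, h^2 = 1, hg = gh, hx = -xh, gx = xg, x^2 = 1 - g^2, where k is algebraically closed of characteristic zero and ξ a primitive 4th root of unity. Then the assignments ρ_1(g) = ξI, ρ_1(h) = diag(1,-1), ρ_1(x) = √2·(antidiagonal matrix with entries 1,1) define a 2-dimensional representation of A, and this representation is irreducible. -/
/- The pointed Hopf algebra `A` of dimension 16, presented as a quotient of the
free algebra on three generators g (= 0), h (= 1), x (= 2). -/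
inductive ARel (k : Type*) [Field k] :
    FreeAlgebra k (Fin 3) → FreeAlgebra k (Fin 3) → Prop
  | g4 : ARel k ((FreeAlgebra.ι k (0 : Fin 3)) ^ 4) 1
  | h2 : ARel k ((FreeAlgebra.ι k (1 : Fin 3)) ^ 2) 1
  | hg : ARel k (FreeAlgebra.ι k (1 : Fin 3) * FreeAlgebra.ι k (0 : Fin 3))
      (FreeAlgebra.ι k (0 : Fin 3) * FreeAlgebra.ι k (1 : Fin 3))
  | hx : ARel k (FreeAlgebra.ι k (1 : Fin 3) * FreeAlgebra.ι k (2 : Fin 3))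
      (-(FreeAlgebra.ι k (2 : Fin 3) * FreeAlgebra.ι k (1 : Fin 3)))
  | gx : ARel k (FreeAlgebra.ι k (0 : Fin 3) * FreeAlgebra.ι k (2 : Fin 3))
      (FreeAlgebra.ι k (2 : Fin 3) * FreeAlgebra.ι k (0 : Fin 3))
  | x2 : ARel k ((FreeAlgebra.ι k (2 : Fin 3)) ^ 2)
      (1 - (FreeAlgebra.ι k (0 : Fin 3)) ^ 2)

/-- The assignments `ρ₁(g) = ξ·I`, `ρ₁(h) = diag(1,-1)`,
`ρ₁(x) = √2 · (antidiagonal 1,1)` define a 2-dimensional representation of `A`,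
and this representation is irreducible (no proper nonzero invariant subspace). -/
theorem stmt1 (k : Type*) [Field k] [IsAlgClosed k] [CharZero k]
    (ξ : k) (hξ : IsPrimitiveRoot ξ 4) (s : k) (hs : s ^ 2 = 2) :
    ∃ ρ : RingQuot (ARel k) →ₐ[k] Matrix (Fin 2) (Fin 2) k,
      ρ (RingQuot.mkAlgHom k (ARel k) (FreeAlgebra.ι k (0 : Fin 3))) = !![ξ, 0; 0, ξ] ∧
      ρ (RingQuot.mkAlgHom k (ARel k) (FreeAlgebra.ι k (1 : Fin 3))) = !![1, 0; 0, -1] ∧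
      ρ (RingQuot.mkAlgHom k (ARel k) (FreeAlgebra.ι k (2 : Fin 3))) = !![0, s; s, 0] ∧
      (∀ W : Submodule k (Fin 2 → k),
        (∀ m : RingQuot (ARel k), ∀ w ∈ W, (ρ m).mulVec w ∈ W) →
        W = ⊥ ∨ W = ⊤) := by
  have h4 : ξ ^ 4 = 1 := hξ.pow_eq_one
  have h2ne : ξ ^ 2 ≠ 1 := hξ.pow_ne_one_of_pos_of_lt (by norm_num) (by norm_num)
  have h2 : ξ ^ 2 = -1 := by
    have : (ξ ^ 2 - 1) * (ξ ^ 2 + 1) = 0 := by linear_combination h4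
    rcases mul_eq_zero.mp this with h | h
    · exact absurd (by linear_combination h) h2ne
    · linear_combination h
  set m : Fin 3 → Matrix (Fin 2) (Fin 2) k := ![!![ξ, 0; 0, ξ], !![1, 0; 0, -1], !![0, s; s, 0]]
  have hrel : ∀ ⦃a b : FreeAlgebra k (Fin 3)⦄, ARel k a b →
      (FreeAlgebra.lift k m) a = (FreeAlgebra.lift k m) b := by
    intro a b r
    cases r <;>
      simp only [map_pow, map_mul, map_one, map_neg, map_sub, FreeAlgebra.lift_ι_apply, m,
        Matrix.cons_val_zero, Matrix.cons_val_one, Matrix.head_cons, Matrix.cons_val_two,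
        Matrix.tail_cons] <;>
      · ext i j
        fin_cases i <;> fin_cases j <;>
          simp [pow_succ, Matrix.mul_apply, Fin.sum_univ_two, Matrix.one_apply] <;>
          first
          | linear_combination h4
          | linear_combination h2
          | linear_combination -h2
          | linear_combination hs
          | linear_combination hs + h2
          | ring
  set ρ : RingQuot (ARel k) →ₐ[k] Matrix (Fin 2) (Fin 2) k :=
    RingQuot.liftAlgHom k ⟨FreeAlgebra.lift k m, hrel⟩ with hρ
  have hGmat : ρ (RingQuot.mkAlgHom k (ARel k) (FreeAlgebra.ι k (0 : Fin 3)))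
      = !![ξ, 0; 0, ξ] := by
    rw [hρ, RingQuot.liftAlgHom_mkAlgHom_apply]; simp [m, FreeAlgebra.lift_ι_apply]
  have hHmat : ρ (RingQuot.mkAlgHom k (ARel k) (FreeAlgebra.ι k (1 : Fin 3)))
      = !![1, 0; 0, -1] := by
    rw [hρ, RingQuot.liftAlgHom_mkAlgHom_apply]; simp [m, FreeAlgebra.lift_ι_apply]
  have hXmat : ρ (RingQuot.mkAlgHom k (ARel k) (FreeAlgebra.ι k (2 : Fin 3)))
      = !![0, s; s, 0] := by
    rw [hρ, RingQuot.liftAlgHom_mkAlgHom_apply]; simp [m, FreeAlgebra.lift_ι_apply]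
  refine ⟨ρ, hGmat, hHmat, hXmat, ?_⟩
  intro W hW
  by_cases hbot : W = ⊥
  · exact Or.inl hbot
  right
  obtain ⟨w, hwW, hw0⟩ := Submodule.exists_mem_ne_zero_of_ne_bot hbot
  have hs0 : s ≠ 0 := by rintro rfl; norm_num at hs
  have hHw : (![w 0, -(w 1)] : Fin 2 → k) ∈ W := by
    have hm := hW (RingQuot.mkAlgHom k (ARel k) (FreeAlgebra.ι k (1 : Fin 3))) w hwW
    rw [hHmat] at hm
    have heq : (!![(1:k), 0; 0, -1]).mulVec w = ![w 0, -(w 1)] := by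
      funext i
      fin_cases i <;>
        simp [Matrix.mulVec, dotProduct, Fin.sum_univ_two, Matrix.vecHead, Matrix.vecTail]
    rwa [heq] at hm
  have hA : (![w 0, 0] : Fin 2 → k) ∈ W := by
    have hm := W.smul_mem (2⁻¹ : k) (W.add_mem hwW hHw)
    have heq : (2⁻¹ : k) • (w + ![w 0, -(w 1)]) = ![w 0, 0] := by
      funext i
      fin_cases i <;>
        simp [Matrix.vecHead, Matrix.vecTail] <;> ring
    rwa [heq] at hm
  have hB : (![0, w 1] : Fin 2 → k) ∈ W := by
    have hm := W.smul_mem (2⁻¹ : k) (W.sub_mem hwW hHw)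
    have heq : (2⁻¹ : k) • (w - ![w 0, -(w 1)]) = ![0, w 1] := by
      funext i
      fin_cases i <;>
        simp [Matrix.vecHead, Matrix.vecTail] <;> ring
    rwa [heq] at hm
  have hX0 : ∀ a : k, (![a, 0] : Fin 2 → k) ∈ W → (![0, a] : Fin 2 → k) ∈ W := by
    intro a ha
    have hm := hW (RingQuot.mkAlgHom k (ARel k) (FreeAlgebra.ι k (2 : Fin 3))) _ ha
    rw [hXmat] at hm
    have heq : (!![(0:k), s; s, 0]).mulVec ![a, 0] = s • ![0, a] := by
      funext i
      fin_cases i <;>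
        simp [Matrix.mulVec, dotProduct, Fin.sum_univ_two, Matrix.vecHead,
          Matrix.vecTail, mul_comm]
    rw [heq] at hm
    have := W.smul_mem (s⁻¹ : k) hm
    rwa [smul_smul, inv_mul_cancel₀ hs0, one_smul] at this
  have hX1 : ∀ a : k, (![0, a] : Fin 2 → k) ∈ W → (![a, 0] : Fin 2 → k) ∈ W := by
    intro a ha
    have hm := hW (RingQuot.mkAlgHom k (ARel k) (FreeAlgebra.ι k (2 : Fin 3))) _ ha
    rw [hXmat] at hm
    have heq : (!![(0:k), s; s, 0]).mulVec ![0, a] = s • ![a, 0] := by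
      funext i
      fin_cases i <;>
        simp [Matrix.mulVec, dotProduct, Fin.sum_univ_two, Matrix.vecHead,
          Matrix.vecTail, mul_comm]
    rw [heq] at hm
    have := W.smul_mem (s⁻¹ : k) hm
    rwa [smul_smul, inv_mul_cancel₀ hs0, one_smul] at this
  have he : (![(1:k), 0] : Fin 2 → k) ∈ W ∧ (![(0:k), 1] : Fin 2 → k) ∈ W := by
    rcases Function.ne_iff.mp hw0 with ⟨i, hi⟩
    fin_cases i
    · have h0 : w 0 ≠ 0 := hi
      have e0 : (![(1:k), 0] : Fin 2 → k) ∈ W := by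
        have hm := W.smul_mem ((w 0)⁻¹ : k) hA
        have heq : ((w 0)⁻¹ : k) • (![w 0, 0] : Fin 2 → k) = ![(1:k), 0] := by
          funext i
          fin_cases i <;> simp [Matrix.vecHead, Matrix.vecTail, inv_mul_cancel₀ h0]
        rwa [heq] at hm
      exact ⟨e0, hX0 1 e0⟩
    · have h1 : w 1 ≠ 0 := hi
      have e1 : (![(0:k), 1] : Fin 2 → k) ∈ W := by
        have hm := W.smul_mem ((w 1)⁻¹ : k) hB
        have heq : ((w 1)⁻¹ : k) • (![0, w 1] : Fin 2 → k) = ![(0:k), 1] := by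
          funext i
          fin_cases i <;> simp [Matrix.vecHead, Matrix.vecTail, inv_mul_cancel₀ h1]
        rwa [heq] at hm
      exact ⟨hX1 1 e1, e1⟩
  rw [eq_top_iff]
  intro v _
  have hv : v = v 0 • (![(1:k), 0] : Fin 2 → k) + v 1 • (![(0:k), 1] : Fin 2 → k) := by
    funext i; fin_cases i <;> simp [Matrix.vecHead, Matrix.vecTail]
  rw [hv]
  exact W.add_mem (W.smul_mem _ he.1) (W.smul_mem _ he.2)
end

section
/- Let H be the k-algebra generated by a, b, c, d with relations a^4 = 1, b^2 = 0, c^2 = 0, d^4 = 1, a^2d^2 = 1, ad = da, bc = 0 = cb, ab = ξba, ac = ξca, bd = ξdb, cd = ξdc, bd = ca, ba = cd (ξ a primitive 4th root of unity). Then the 16 elements {a^i, da^i, ba^i, ca^i : 0 ≤ i ≤ 3} span H as a k-vector space. -/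
/- The 16-dimensional Hopf algebra `H`, presented as a quotient of the free
algebra on four generators a (= 0), b (= 1), c (= 2), d (= 3). -/

namespace HPresentation

variable (k : Type*) [Field k]

noncomputable def A : FreeAlgebra k (Fin 4) := FreeAlgebra.ι k 0
noncomputable def B : FreeAlgebra k (Fin 4) := FreeAlgebra.ι k 1
noncomputable def C : FreeAlgebra k (Fin 4) := FreeAlgebra.ι k 2
noncomputable def D : FreeAlgebra k (Fin 4) := FreeAlgebra.ι k 3

inductive HRel (ξ : k) : FreeAlgebra k (Fin 4) → FreeAlgebra k (Fin 4) → Prop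
  | a4 : HRel ξ (A k ^ 4) 1
  | b2 : HRel ξ (B k ^ 2) 0
  | c2 : HRel ξ (C k ^ 2) 0
  | d4 : HRel ξ (D k ^ 4) 1
  | a2d2 : HRel ξ (A k ^ 2 * D k ^ 2) 1
  | ad : HRel ξ (A k * D k) (D k * A k)
  | bc : HRel ξ (B k * C k) 0
  | cb : HRel ξ (C k * B k) 0
  | ab : HRel ξ (A k * B k) (ξ • (B k * A k))
  | ac : HRel ξ (A k * C k) (ξ • (C k * A k))
  | bd : HRel ξ (B k * D k) (ξ • (D k * B k))
  | cd : HRel ξ (C k * D k) (ξ • (D k * C k))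
  | bdca : HRel ξ (B k * D k) (C k * A k)
  | bacd : HRel ξ (B k * A k) (C k * D k)

noncomputable def H (ξ : k) := RingQuot (HRel k ξ)

noncomputable instance (ξ : k) : Ring (H k ξ) := by unfold H; infer_instance
noncomputable instance (ξ : k) : Algebra k (H k ξ) := by unfold H; infer_instance

noncomputable def a (ξ : k) : H k ξ := RingQuot.mkAlgHom k (HRel k ξ) (A k)
noncomputable def b (ξ : k) : H k ξ := RingQuot.mkAlgHom k (HRel k ξ) (B k)
noncomputable def c (ξ : k) : H k ξ := RingQuot.mkAlgHom k (HRel k ξ) (C k)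
noncomputable def d (ξ : k) : H k ξ := RingQuot.mkAlgHom k (HRel k ξ) (D k)

end HPresentation

open HPresentation

section Aux

variable {k : Type*} [Field k] {ξ : k}

private lemma hrel {x y : FreeAlgebra k (Fin 4)} (h : HRel k ξ x y) :
    (RingQuot.mkAlgHom k (HRel k ξ) x : H k ξ) = RingQuot.mkAlgHom k (HRel k ξ) y :=
  RingQuot.mkAlgHom_rel k h

private lemma ha4 : a k ξ ^ 4 = 1 := by
  have h := hrel (HRel.a4 (k := k) (ξ := ξ))
  rw [map_pow, map_one] at h
  exact h

private lemma hbb : b k ξ * b k ξ = 0 := by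
  have h := hrel (HRel.b2 (k := k) (ξ := ξ))
  rw [map_pow, map_zero, pow_two] at h
  exact h

private lemma hcc : c k ξ * c k ξ = 0 := by
  have h := hrel (HRel.c2 (k := k) (ξ := ξ))
  rw [map_pow, map_zero, pow_two] at h
  exact h

private lemma ha2d2 : a k ξ ^ 2 * d k ξ ^ 2 = 1 := by
  have h := hrel (HRel.a2d2 (k := k) (ξ := ξ))
  rw [map_mul, map_pow, map_pow, map_one] at h
  exact h

private lemma had : a k ξ * d k ξ = d k ξ * a k ξ := by
  have h := hrel (HRel.ad (k := k) (ξ := ξ))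
  rw [map_mul, map_mul] at h
  exact h

private lemma hbc : b k ξ * c k ξ = 0 := by
  have h := hrel (HRel.bc (k := k) (ξ := ξ))
  rw [map_mul, map_zero] at h
  exact h

private lemma hcb : c k ξ * b k ξ = 0 := by
  have h := hrel (HRel.cb (k := k) (ξ := ξ))
  rw [map_mul, map_zero] at h
  exact h

private lemma hab : a k ξ * b k ξ = ξ • (b k ξ * a k ξ) := by
  have h := hrel (HRel.ab (k := k) (ξ := ξ))
  rw [map_mul, map_smul, map_mul] at h
  exact h

private lemma hac : a k ξ * c k ξ = ξ • (c k ξ * a k ξ) := by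
  have h := hrel (HRel.ac (k := k) (ξ := ξ))
  rw [map_mul, map_smul, map_mul] at h
  exact h

private lemma hbd : b k ξ * d k ξ = ξ • (d k ξ * b k ξ) := by
  have h := hrel (HRel.bd (k := k) (ξ := ξ))
  rw [map_mul, map_smul, map_mul] at h
  exact h

private lemma hcd : c k ξ * d k ξ = ξ • (d k ξ * c k ξ) := by
  have h := hrel (HRel.cd (k := k) (ξ := ξ))
  rw [map_mul, map_smul, map_mul] at h
  exact h

private lemma hbdca : b k ξ * d k ξ = c k ξ * a k ξ := by
  have h := hrel (HRel.bdca (k := k) (ξ := ξ))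
  rw [map_mul, map_mul] at h
  exact h

private lemma hbacd : b k ξ * a k ξ = c k ξ * d k ξ := by
  have h := hrel (HRel.bacd (k := k) (ξ := ξ))
  rw [map_mul, map_mul] at h
  exact h

variable (hξ4 : ξ ^ 4 = 1)
include hξ4

private lemma hdb : d k ξ * b k ξ = ξ ^ 3 • (b k ξ * d k ξ) := by
  rw [hbd, smul_smul, ← pow_succ, hξ4, one_smul]

private lemma hdc : d k ξ * c k ξ = ξ ^ 3 • (c k ξ * d k ξ) := by
  rw [hcd, smul_smul, ← pow_succ, hξ4, one_smul]

omit hξ4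

private lemma hd2 : d k ξ ^ 2 = a k ξ ^ 2 := by
  calc d k ξ ^ 2 = 1 * d k ξ ^ 2 := (one_mul _).symm
    _ = a k ξ ^ 4 * d k ξ ^ 2 := by rw [ha4]
    _ = a k ξ ^ 2 * (a k ξ ^ 2 * d k ξ ^ 2) := by
        rw [show (4 : ℕ) = 2 + 2 from rfl, pow_add, mul_assoc]
    _ = a k ξ ^ 2 := by rw [ha2d2, mul_one]

private lemma hanb : ∀ n : ℕ, a k ξ ^ n * b k ξ = ξ ^ n • (b k ξ * a k ξ ^ n) := by
  intro n
  induction n with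
  | zero => simp
  | succ n ih =>
    rw [pow_succ', mul_assoc, ih, mul_smul_comm, ← mul_assoc, hab, smul_mul_assoc,
      smul_smul, mul_assoc, ← pow_succ', ← pow_succ]

private lemma hanc : ∀ n : ℕ, a k ξ ^ n * c k ξ = ξ ^ n • (c k ξ * a k ξ ^ n) := by
  intro n
  induction n with
  | zero => simp
  | succ n ih =>
    rw [pow_succ', mul_assoc, ih, mul_smul_comm, ← mul_assoc, hac, smul_mul_assoc,
      smul_smul, mul_assoc, ← pow_succ', ← pow_succ]

private lemma hand : ∀ n : ℕ, a k ξ ^ n * d k ξ = d k ξ * a k ξ ^ n := fun n =>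
  ((Commute.pow_left (had : Commute (a k ξ) (d k ξ)) n)).eq

end Aux

/-- The 16 elements {a^i, d·a^i, b·a^i, c·a^i : 0 ≤ i ≤ 3} span . -/
theorem stmt2 (k : Type*) [Field k] [IsAlgClosed k] [CharZero k]
    (ξ : k) (hξ : IsPrimitiveRoot ξ 4) :
    Submodule.span k
      ((Set.range fun i : Fin 4 => a k ξ ^ (i : ℕ)) ∪
       (Set.range fun i : Fin 4 => d k ξ * a k ξ ^ (i : ℕ)) ∪
       (Set.range fun i : Fin 4 => b k ξ * a k ξ ^ (i : ℕ)) ∪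
       (Set.range fun i : Fin 4 => c k ξ * a k ξ ^ (i : ℕ))) = ⊤ := by
  have hξ4 : ξ ^ 4 = 1 := hξ.pow_eq_one
  set S : Set (H k ξ) :=
      ((Set.range fun i : Fin 4 => a k ξ ^ (i : ℕ)) ∪
       (Set.range fun i : Fin 4 => d k ξ * a k ξ ^ (i : ℕ)) ∪
       (Set.range fun i : Fin 4 => b k ξ * a k ξ ^ (i : ℕ)) ∪
       (Set.range fun i : Fin 4 => c k ξ * a k ξ ^ (i : ℕ))) with hS
  set M : Submodule k (H k ξ) := Submodule.span k S with hM
  -- membership of the reduced monomials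
  have hA : ∀ n : ℕ, a k ξ ^ n ∈ M := by
    intro n
    rw [pow_eq_pow_mod n ha4]
    exact Submodule.subset_span
      (Or.inl (Or.inl (Or.inl ⟨⟨n % 4, Nat.mod_lt _ (by norm_num)⟩, rfl⟩)))
  have hD : ∀ n : ℕ, d k ξ * a k ξ ^ n ∈ M := by
    intro n
    rw [pow_eq_pow_mod n ha4]
    exact Submodule.subset_span
      (Or.inl (Or.inl (Or.inr ⟨⟨n % 4, Nat.mod_lt _ (by norm_num)⟩, rfl⟩)))
  have hB : ∀ n : ℕ, b k ξ * a k ξ ^ n ∈ M := by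
    intro n
    rw [pow_eq_pow_mod n ha4]
    exact Submodule.subset_span
      (Or.inl (Or.inr ⟨⟨n % 4, Nat.mod_lt _ (by norm_num)⟩, rfl⟩))
  have hC : ∀ n : ℕ, c k ξ * a k ξ ^ n ∈ M := by
    intro n
    rw [pow_eq_pow_mod n ha4]
    exact Submodule.subset_span
      (Or.inr ⟨⟨n % 4, Nat.mod_lt _ (by norm_num)⟩, rfl⟩)
  -- closure of M under right multiplication by the four generators
  have key : ∀ s ∈ S, ∀ g, g = a k ξ ∨ g = b k ξ ∨ g = c k ξ ∨ g = d k ξ →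
      s * g ∈ M := by
    rintro s hs g hg
    rcases hs with ((⟨i, rfl⟩ | ⟨i, rfl⟩) | ⟨i, rfl⟩) | ⟨i, rfl⟩ <;>
      rcases hg with rfl | rfl | rfl | rfl
    -- a^i * a
    · rw [← pow_succ]; exact hA _
    -- a^i * b
    · rw [hanb]; exact Submodule.smul_mem _ _ (hB _)
    -- a^i * c
    · rw [hanc]; exact Submodule.smul_mem _ _ (hC _)
    -- a^i * d
    · rw [hand]; exact hD _
    -- (d a^i) * a
    · rw [mul_assoc, ← pow_succ]; exact hD _
    -- (d a^i) * b
    · rw [mul_assoc, hanb, mul_smul_comm, ← mul_assoc, hdb hξ4, smul_mul_assoc,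
        smul_smul, hbdca, mul_assoc, ← pow_succ']
      exact Submodule.smul_mem _ _ (hC _)
    -- (d a^i) * c
    · rw [mul_assoc, hanc, mul_smul_comm, ← mul_assoc, hdc hξ4, smul_mul_assoc,
        smul_smul, hbacd.symm, mul_assoc, ← pow_succ']
      exact Submodule.smul_mem _ _ (hB _)
    -- (d a^i) * d
    · rw [mul_assoc, hand, ← mul_assoc, ← pow_two, hd2, ← pow_add]
      exact hA _
    -- (b a^i) * a
    · rw [mul_assoc, ← pow_succ]; exact hB _
    -- (b a^i) * b
    · rw [mul_assoc, hanb, mul_smul_comm, ← mul_assoc, hbb, zero_mul, smul_zero]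
      exact Submodule.zero_mem _
    -- (b a^i) * c
    · rw [mul_assoc, hanc, mul_smul_comm, ← mul_assoc, hbc, zero_mul, smul_zero]
      exact Submodule.zero_mem _
    -- (b a^i) * d
    · rw [mul_assoc, hand, ← mul_assoc, hbdca, mul_assoc, ← pow_succ']
      exact hC _
    -- (c a^i) * a
    · rw [mul_assoc, ← pow_succ]; exact hC _
    -- (c a^i) * b
    · rw [mul_assoc, hanb, mul_smul_comm, ← mul_assoc, hcb, zero_mul, smul_zero]
      exact Submodule.zero_mem _
    -- (c a^i) * c
    · rw [mul_assoc, hanc, mul_smul_comm, ← mul_assoc, hcc, zero_mul, smul_zero]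
      exact Submodule.zero_mem _
    -- (c a^i) * d
    · rw [mul_assoc, hand, ← mul_assoc, ← hbacd, mul_assoc, ← pow_succ']
      exact hB _
  have keyM : ∀ g, g = a k ξ ∨ g = b k ξ ∨ g = c k ξ ∨ g = d k ξ →
      ∀ m ∈ M, m * g ∈ M := by
    intro g hg m hm
    induction hm using Submodule.span_induction with
    | mem x hx => exact key x hx g hg
    | zero => rw [zero_mul]; exact Submodule.zero_mem _
    | add x y hx hy ihx ihy => rw [add_mul]; exact Submodule.add_mem _ ihx ihy
    | smul r x hx ihx => rw [smul_mul_assoc]; exact Submodule.smul_mem _ _ ihx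
  have h1M : (1 : H k ξ) ∈ M := by simpa using hA 0
  -- every element of H lies in M
  let f : FreeAlgebra k (Fin 4) →ₐ[k] H k ξ := RingQuot.mkAlgHom k (HRel k ξ)
  have main : ∀ y : FreeAlgebra k (Fin 4), ∀ m ∈ M, m * f y ∈ M := by
    intro y
    induction y using FreeAlgebra.induction with
    | grade0 r =>
      intro m hm
      rw [AlgHom.commutes, ← Algebra.commutes, ← Algebra.smul_def]
      exact Submodule.smul_mem _ _ hm
    | grade1 x =>
      intro m hm
      fin_cases x
      · exact keyM _ (Or.inl rfl) m hm
      · exact keyM _ (Or.inr (Or.inl rfl)) m hm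
      · exact keyM _ (Or.inr (Or.inr (Or.inl rfl))) m hm
      · exact keyM _ (Or.inr (Or.inr (Or.inr rfl))) m hm
    | mul x y ihx ihy =>
      intro m hm
      rw [map_mul, ← mul_assoc]
      exact ihy _ (ihx m hm)
    | add x y ihx ihy =>
      intro m hm
      rw [map_add, mul_add]
      exact Submodule.add_mem _ (ihx m hm) (ihy m hm)
  rw [eq_top_iff]
  rintro x -
  obtain ⟨y, rfl⟩ := RingQuot.mkAlgHom_surjective k (HRel k ξ) x
  have := main y 1 h1M
  rwa [one_mul] at this
end

section
/- In the Hopf algebra H with generators a, b, c, d as above and antipode determined by S(a) = a^3, S(d) = d^3, S(b) = ξca^2, S(c) = ξ^3 ba^2, the antipode axiom m∘(S⊗id)∘Δ = u∘ε holds on the generators, i.e. S(a)a + S(b)c = 1, S(a)b + S(b)d = 0, S(c)a + S(d)c = 0, S(d)d + S(c)b = 1. -/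
open HPresentation

/-- The antipode axiom `m ∘ (S ⊗ id) ∘ Δ = u ∘ ε` holds on the generators of `H`,
where `S(a) = a³`, `S(b) = ξca²`, `S(c) = ξ³ba²`, `S(d) = d³`:
`S(a)a + S(b)c = 1`, `S(a)b + S(b)d = 0`, `S(c)a + S(d)c = 0`, `S(d)d + S(c)b = 1`. -/
theorem stmt6 (k : Type*) [Field k] [IsAlgClosed k] [CharZero k]
    (ξ : k) (hξ : IsPrimitiveRoot ξ 4) :
    a k ξ ^ 3 * a k ξ + (ξ • (c k ξ * a k ξ ^ 2)) * c k ξ = 1 ∧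
    a k ξ ^ 3 * b k ξ + (ξ • (c k ξ * a k ξ ^ 2)) * d k ξ = 0 ∧
    (ξ ^ 3 • (b k ξ * a k ξ ^ 2)) * a k ξ + d k ξ ^ 3 * c k ξ = 0 ∧
    d k ξ ^ 3 * d k ξ + (ξ ^ 3 • (b k ξ * a k ξ ^ 2)) * b k ξ = 1 := by
  set A' := a k ξ with hA'
  set B' := b k ξ with hB'
  set C' := c k ξ with hC'
  set D' := d k ξ with hD'
  set ζ : H k ξ := algebraMap k (H k ξ) ξ with hζdef
  -- primitive root facts
  have hξ4 : ξ ^ 4 = 1 := hξ.pow_eq_one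
  have hξ2 : ξ ^ 2 = -1 := by
    have h2 : ξ ^ 2 ≠ 1 := hξ.pow_ne_one_of_pos_of_lt (by norm_num) (by norm_num)
    have hz : (ξ ^ 2 - 1) * (ξ ^ 2 + 1) = 0 := by linear_combination hξ4
    rcases mul_eq_zero.mp hz with h | h
    · exact absurd (by linear_combination h : ξ ^ 2 = 1) h2
    · linear_combination h
  have hζ2 : ζ ^ 2 = -1 := by rw [hζdef, ← map_pow, hξ2, map_neg, map_one]
  have hζ4 : ζ ^ 4 = 1 := by rw [hζdef, ← map_pow, hξ4, map_one]
  have hζ31 : ζ ^ 3 + ζ = 0 := by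
    have h1 : ζ ^ 2 * ζ + ζ = 0 := by rw [hζ2]; noncomm_ring
    calc ζ ^ 3 + ζ = ζ ^ 2 * ζ + ζ := by noncomm_ring
    _ = 0 := h1
  -- moving scalars
  have hcomm : ∀ x : H k ξ, Commute ζ x := fun x => Algebra.commutes ξ x
  have cm1 : ∀ x y : H k ξ, x * (ζ * y) = ζ * (x * y) := fun x y => by
    rw [← mul_assoc, ← (hcomm x).eq, mul_assoc]
  have cm3 : ∀ x y : H k ξ, x * (ζ ^ 3 * y) = ζ ^ 3 * (x * y) := fun x y => by
    rw [← mul_assoc, ← ((hcomm x).pow_left 3).eq, mul_assoc]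
  have cml1 : ∀ x y : H k ξ, (ζ * x) * y = ζ * (x * y) := fun x y => mul_assoc _ _ _
  have cml3 : ∀ x y : H k ξ, (ζ ^ 3 * x) * y = ζ ^ 3 * (x * y) := fun x y =>
    mul_assoc _ _ _
  -- relations in H
  have rel : ∀ {x y : FreeAlgebra k (Fin 4)}, HRel k ξ x y →
      RingQuot.mkAlgHom k (HRel k ξ) x = RingQuot.mkAlgHom k (HRel k ξ) y :=
    fun h => RingQuot.mkAlgHom_rel k h
  have ha4 : A' ^ 4 = 1 := by
    have h := rel HRel.a4; rw [map_pow, map_one] at h; exact h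
  have hc2 : C' ^ 2 = 0 := by
    have h := rel HRel.c2; rw [map_pow, map_zero] at h; exact h
  have hd4 : D' ^ 4 = 1 := by
    have h := rel HRel.d4; rw [map_pow, map_one] at h; exact h
  have ha2d2 : A' ^ 2 * D' ^ 2 = 1 := by
    have h := rel HRel.a2d2; rw [map_mul, map_pow, map_pow, map_one] at h; exact h
  have had : A' * D' = D' * A' := by
    have h := rel HRel.ad; rw [map_mul, map_mul] at h; exact h
  have hab : A' * B' = ζ * (B' * A') := by
    have h := rel HRel.ab
    rw [map_mul, map_smul, map_mul, Algebra.smul_def] at h; exact h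
  have hac : A' * C' = ζ * (C' * A') := by
    have h := rel HRel.ac
    rw [map_mul, map_smul, map_mul, Algebra.smul_def] at h; exact h
  have hcd : C' * D' = ζ * (D' * C') := by
    have h := rel HRel.cd
    rw [map_mul, map_smul, map_mul, Algebra.smul_def] at h; exact h
  have hbacd : B' * A' = C' * D' := by
    have h := rel HRel.bacd; rw [map_mul, map_mul] at h; exact h
  -- derived relations
  have hdc : D' * C' = ζ ^ 3 * (C' * D') := by
    rw [hcd, (show ζ ^ 3 * (ζ * (D' * C')) = ζ ^ 4 * (D' * C') by noncomm_ring),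
      hζ4, one_mul]
  have ha2d : A' ^ 2 * D' = D' * A' ^ 2 := by
    calc A' ^ 2 * D' = A' * (A' * D') := by noncomm_ring
    _ = A' * (D' * A') := by rw [had]
    _ = (A' * D') * A' := by noncomm_ring
    _ = (D' * A') * A' := by rw [had]
    _ = D' * A' ^ 2 := by noncomm_ring
  have hd2a2 : D' ^ 2 = A' ^ 2 := by
    have haa : A' ^ 2 * A' ^ 2 = (1 : H k ξ) := by
      have h4 : A' ^ 2 * A' ^ 2 = A' ^ 4 := by noncomm_ring
      rw [h4, ha4]
    calc D' ^ 2 = (A' ^ 2 * A' ^ 2) * D' ^ 2 := by rw [haa, one_mul]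
    _ = A' ^ 2 * (A' ^ 2 * D' ^ 2) := by noncomm_ring
    _ = A' ^ 2 := by rw [ha2d2, mul_one]
  have hcda2 : C' * D' * A' ^ 2 = C' * A' ^ 2 * D' := by
    calc C' * D' * A' ^ 2 = C' * (D' * A' ^ 2) := by noncomm_ring
    _ = C' * (A' ^ 2 * D') := by rw [← ha2d]
    _ = C' * A' ^ 2 * D' := by noncomm_ring
  -- key products
  have hca2c : C' * A' ^ 2 * C' = 0 := by
    calc C' * A' ^ 2 * C' = (C' * A') * (A' * C') := by noncomm_ring
    _ = (C' * A') * (ζ * (C' * A')) := by rw [hac]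
    _ = ζ * ((C' * A') * (C' * A')) := cm1 _ _
    _ = ζ * (C' * (A' * C') * A') := by noncomm_ring
    _ = ζ * (C' * (ζ * (C' * A')) * A') := by rw [hac]
    _ = ζ * (ζ * (C' * (C' * A') * A')) := by rw [cm1]; noncomm_ring
    _ = ζ * (ζ * (C' ^ 2 * A' ^ 2)) := by noncomm_ring
    _ = 0 := by rw [hc2, zero_mul, mul_zero, mul_zero]
  have ha3b : A' ^ 3 * B' = ζ ^ 3 * (C' * D' * A' ^ 2) := by
    calc A' ^ 3 * B' = A' * (A' * (A' * B')) := by noncomm_ring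
    _ = A' * (A' * (ζ * (B' * A'))) := by rw [hab]
    _ = ζ * (A' * (A' * (B' * A'))) := by rw [cm1, cm1]
    _ = ζ * (A' * ((A' * B') * A')) := by noncomm_ring
    _ = ζ * (A' * ((ζ * (B' * A')) * A')) := by rw [hab]
    _ = ζ * (ζ * (A' * ((B' * A') * A'))) := by rw [cml1, cm1]
    _ = ζ * (ζ * ((A' * B') * A' ^ 2)) := by noncomm_ring
    _ = ζ * (ζ * ((ζ * (B' * A')) * A' ^ 2)) := by rw [hab]
    _ = ζ * (ζ * ((ζ * (C' * D')) * A' ^ 2)) := by rw [hbacd]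
    _ = ζ ^ 3 * (C' * D' * A' ^ 2) := by noncomm_ring
  have hba3 : B' * A' ^ 2 * A' = C' * D' * A' ^ 2 := by
    calc B' * A' ^ 2 * A' = (B' * A') * A' ^ 2 := by noncomm_ring
    _ = C' * D' * A' ^ 2 := by rw [hbacd]
  have hd3c : D' ^ 3 * C' = ζ * (C' * D' * A' ^ 2) := by
    calc D' ^ 3 * C' = D' * (D' * (D' * C')) := by noncomm_ring
    _ = D' * (D' * (ζ ^ 3 * (C' * D'))) := by rw [hdc]
    _ = ζ ^ 3 * (D' * (D' * (C' * D'))) := by rw [cm3, cm3]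
    _ = ζ ^ 3 * (D' * ((D' * C') * D')) := by noncomm_ring
    _ = ζ ^ 3 * (D' * ((ζ ^ 3 * (C' * D')) * D')) := by rw [hdc]
    _ = ζ ^ 3 * (ζ ^ 3 * (D' * ((C' * D') * D'))) := by rw [cml3, cm3]
    _ = ζ ^ 3 * (ζ ^ 3 * ((D' * C') * D' ^ 2)) := by noncomm_ring
    _ = ζ ^ 3 * (ζ ^ 3 * ((ζ ^ 3 * (C' * D')) * D' ^ 2)) := by rw [hdc]
    _ = ζ ^ 4 * (ζ ^ 4 * (ζ * ((C' * D') * D' ^ 2))) := by noncomm_ring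
    _ = ζ * (C' * D' * D' ^ 2) := by rw [hζ4, one_mul, one_mul]
    _ = ζ * (C' * D' * A' ^ 2) := by rw [hd2a2]
  have hba2b : B' * A' ^ 2 * B' = 0 := by
    calc B' * A' ^ 2 * B' = (B' * A') * (A' * B') := by noncomm_ring
    _ = (B' * A') * (ζ * (B' * A')) := by rw [hab]
    _ = (C' * D') * (ζ * (C' * D')) := by rw [hbacd]
    _ = ζ * ((C' * D') * (C' * D')) := cm1 _ _
    _ = ζ * (C' * ((D' * C') * D')) := by noncomm_ring
    _ = ζ * (C' * ((ζ ^ 3 * (C' * D')) * D')) := by rw [hdc]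
    _ = ζ * (ζ ^ 3 * (C' * ((C' * D') * D'))) := by rw [cml3, cm3]
    _ = ζ ^ 4 * (C' ^ 2 * D' ^ 2) := by noncomm_ring
    _ = 0 := by rw [hc2, zero_mul, mul_zero]
  -- conclude
  have hsm : ∀ x : H k ξ, ξ • x = ζ * x := fun x => Algebra.smul_def ξ x
  have hsm3 : ∀ x : H k ξ, ξ ^ 3 • x = ζ ^ 3 * x := fun x => by
    rw [Algebra.smul_def, map_pow, hζdef]
  refine ⟨?_, ?_, ?_, ?_⟩
  · rw [hsm, ← pow_succ, ha4, cml1, show (C' * A' ^ 2) * C' = C' * A' ^ 2 * C' from rfl,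
      hca2c, mul_zero, add_zero]
  · rw [hsm, cml1, show (C' * A' ^ 2) * D' = C' * A' ^ 2 * D' from rfl, ← hcda2,
      ha3b, ← add_mul, hζ31, zero_mul]
  · rw [hsm3, cml3, show (B' * A' ^ 2) * A' = B' * A' ^ 2 * A' from rfl, hba3, hd3c,
      ← add_mul, hζ31, zero_mul]
  · rw [hsm3, cml3, show (B' * A' ^ 2) * B' = B' * A' ^ 2 * B' from rfl, hba2b,
      mul_zero, add_zero, ← pow_succ, hd4]
end

section
/- Let D be the algebra generated by g, h, x, a, b, c, d where g, h, x satisfy the relations of A^bop (g^4 = 1, h^2 = 1, gh = hg, xh = -hx, xg = gx, x^2 = 1 - g^2), a, b, c, d satisfy the relations of H, and the cross relations ag = ga, ah = ha, dg = gd, dh = hd, bg = gb, bh = -hb, cg = gc, ch = -hc, ax + ξxa = √2ξ(c - ghb), dx - ξxd = √2ξ(ghc - b), bx + ξxb = √2ξ(d - gha), cx - ξxc = √2ξ(ghd - a). Then any algebra homomorphism χ: D → k satisfies χ(x) = χ(b) = χ(c) = 0, χ(g)^2 = 1, χ(h)^2 = 1, χ(a)^4 = 1, and χ(d) = χ(g)χ(h)χ(a).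 -/
/- The Drinfeld double `D`, presented as a quotient of the free algebra on seven
generators g (= 0), h (= 1), x (= 2), a (= 3), b (= 4), c (= 5), d (= 6). -/

namespace DPresentation

variable (k : Type*) [Field k]

noncomputable def G : FreeAlgebra k (Fin 7) := FreeAlgebra.ι k 0
noncomputable def Hh : FreeAlgebra k (Fin 7) := FreeAlgebra.ι k 1
noncomputable def X : FreeAlgebra k (Fin 7) := FreeAlgebra.ι k 2
noncomputable def A : FreeAlgebra k (Fin 7) := FreeAlgebra.ι k 3
noncomputable def B : FreeAlgebra k (Fin 7) := FreeAlgebra.ι k 4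
noncomputable def C : FreeAlgebra k (Fin 7) := FreeAlgebra.ι k 5
noncomputable def Dd : FreeAlgebra k (Fin 7) := FreeAlgebra.ι k 6

/-- The defining relations of `D`: the relations of `𝒜^bop`, the relations of `H`,
and the cross relations; `ξ` is a primitive 4-th root of unity and `s = √2`. -/
inductive DRel (ξ s : k) : FreeAlgebra k (Fin 7) → FreeAlgebra k (Fin 7) → Prop
  -- relations of 𝒜^bop
  | g4 : DRel ξ s (G k ^ 4) 1
  | h2 : DRel ξ s (Hh k ^ 2) 1
  | gh : DRel ξ s (G k * Hh k) (Hh k * G k)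
  | xh : DRel ξ s (X k * Hh k) (-(Hh k * X k))
  | xg : DRel ξ s (X k * G k) (G k * X k)
  | x2 : DRel ξ s (X k ^ 2) (1 - G k ^ 2)
  -- relations of H
  | a4 : DRel ξ s (A k ^ 4) 1
  | b2 : DRel ξ s (B k ^ 2) 0
  | c2 : DRel ξ s (C k ^ 2) 0
  | d4 : DRel ξ s (Dd k ^ 4) 1
  | a2d2 : DRel ξ s (A k ^ 2 * Dd k ^ 2) 1
  | ad : DRel ξ s (A k * Dd k) (Dd k * A k)
  | bc : DRel ξ s (B k * C k) 0
  | cb : DRel ξ s (C k * B k) 0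
  | ab : DRel ξ s (A k * B k) (ξ • (B k * A k))
  | ac : DRel ξ s (A k * C k) (ξ • (C k * A k))
  | bd : DRel ξ s (B k * Dd k) (ξ • (Dd k * B k))
  | cd : DRel ξ s (C k * Dd k) (ξ • (Dd k * C k))
  | bdca : DRel ξ s (B k * Dd k) (C k * A k)
  | bacd : DRel ξ s (B k * A k) (C k * Dd k)
  -- cross relations
  | ag : DRel ξ s (A k * G k) (G k * A k)
  | ah : DRel ξ s (A k * Hh k) (Hh k * A k)
  | dg : DRel ξ s (Dd k * G k) (G k * Dd k)
  | dh : DRel ξ s (Dd k * Hh k) (Hh k * Dd k)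
  | bg : DRel ξ s (B k * G k) (G k * B k)
  | bh : DRel ξ s (B k * Hh k) (-(Hh k * B k))
  | cg : DRel ξ s (C k * G k) (G k * C k)
  | ch : DRel ξ s (C k * Hh k) (-(Hh k * C k))
  | ax : DRel ξ s (A k * X k + ξ • (X k * A k)) ((s * ξ) • (C k - G k * Hh k * B k))
  | dx : DRel ξ s (Dd k * X k - ξ • (X k * Dd k)) ((s * ξ) • (G k * Hh k * C k - B k))
  | bx : DRel ξ s (B k * X k + ξ • (X k * B k)) ((s * ξ) • (Dd k - G k * Hh k * A k))
  | cx : DRel ξ s (C k * X k - ξ • (X k * C k)) ((s * ξ) • (G k * Hh k * Dd k - A k))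

noncomputable def D (ξ s : k) := RingQuot (DRel k ξ s)

noncomputable instance (ξ s : k) : Ring (D k ξ s) := by unfold D; infer_instance
noncomputable instance (ξ s : k) : Algebra k (D k ξ s) := by unfold D; infer_instance

noncomputable def g (ξ s : k) : D k ξ s := RingQuot.mkAlgHom k (DRel k ξ s) (G k)
noncomputable def h (ξ s : k) : D k ξ s := RingQuot.mkAlgHom k (DRel k ξ s) (Hh k)
noncomputable def x (ξ s : k) : D k ξ s := RingQuot.mkAlgHom k (DRel k ξ s) (X k)
noncomputable def a (ξ s : k) : D k ξ s := RingQuot.mkAlgHom k (DRel k ξ s) (A k)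
noncomputable def b (ξ s : k) : D k ξ s := RingQuot.mkAlgHom k (DRel k ξ s) (B k)
noncomputable def c (ξ s : k) : D k ξ s := RingQuot.mkAlgHom k (DRel k ξ s) (C k)
noncomputable def d (ξ s : k) : D k ξ s := RingQuot.mkAlgHom k (DRel k ξ s) (Dd k)

end DPresentation

open DPresentation

/-- Any algebra homomorphism `χ : D → k` satisfies `χ(x) = χ(b) = χ(c) = 0`,
`χ(g)² = 1`, `χ(h)² = 1`, `χ(a)⁴ = 1`, and `χ(d) = χ(g)χ(h)χ(a)`. -/
theorem stmt7 (k : Type*) [Field k] [IsAlgClosed k] [CharZero k]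
    (ξ : k) (hξ : IsPrimitiveRoot ξ 4) (s : k) (hs : s ^ 2 = 2)
    (χ : D k ξ s →ₐ[k] k) :
    χ (x k ξ s) = 0 ∧ χ (b k ξ s) = 0 ∧ χ (c k ξ s) = 0 ∧
    χ (g k ξ s) ^ 2 = 1 ∧ χ (h k ξ s) ^ 2 = 1 ∧ χ (a k ξ s) ^ 4 = 1 ∧
    χ (d k ξ s) = χ (g k ξ s) * χ (h k ξ s) * χ (a k ξ s) := by

  set φ := χ.comp (RingQuot.mkAlgHom k (DRel k ξ s)) with hφ
  have key : ∀ u v, DRel k ξ s u v → φ u = φ v := fun u v hr =>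
    congrArg χ (RingQuot.mkAlgHom_rel k hr)
  have hgv : φ (G k) = χ (g k ξ s) := rfl
  have hhv : φ (Hh k) = χ (h k ξ s) := rfl
  have hxv : φ (X k) = χ (x k ξ s) := rfl
  have hav : φ (A k) = χ (a k ξ s) := rfl
  have hbv : φ (B k) = χ (b k ξ s) := rfl
  have hcv : φ (C k) = χ (c k ξ s) := rfl
  have hdv : φ (Dd k) = χ (d k ξ s) := rfl
  have h2 : χ (h k ξ s) ^ 2 = 1 := by
    simpa [map_pow, hhv] using key _ _ (DRel.h2 (k := k) (ξ := ξ) (s := s))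
  have hne : χ (h k ξ s) ≠ 0 := by
    intro h0; rw [h0] at h2; simp at h2
  have hx0 : χ (x k ξ s) = 0 := by
    have := key _ _ (DRel.xh (k := k) (ξ := ξ) (s := s))
    simp only [map_mul, map_neg, hhv, hxv] at this
    have h2' : (2 : k) * (χ (x k ξ s) * χ (h k ξ s)) = 0 := by ring_nf; linear_combination this
    rcases mul_eq_zero.mp h2' with h' | h'
    · exact absurd h' two_ne_zero
    · rcases mul_eq_zero.mp h' with h'' | h''
      · exact h''
      · exact absurd h'' hne
  have hb0 : χ (b k ξ s) = 0 := by
    have := key _ _ (DRel.bh (k := k) (ξ := ξ) (s := s))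
    simp only [map_mul, map_neg, hhv, hbv] at this
    have h2' : (2 : k) * (χ (b k ξ s) * χ (h k ξ s)) = 0 := by ring_nf; linear_combination this
    rcases mul_eq_zero.mp h2' with h' | h'
    · exact absurd h' two_ne_zero
    · rcases mul_eq_zero.mp h' with h'' | h''
      · exact h''
      · exact absurd h'' hne
  have hc0 : χ (c k ξ s) = 0 := by
    have := key _ _ (DRel.ch (k := k) (ξ := ξ) (s := s))
    simp only [map_mul, map_neg, hhv, hcv] at this
    have h2' : (2 : k) * (χ (c k ξ s) * χ (h k ξ s)) = 0 := by ring_nf; linear_combination this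
    rcases mul_eq_zero.mp h2' with h' | h'
    · exact absurd h' two_ne_zero
    · rcases mul_eq_zero.mp h' with h'' | h''
      · exact h''
      · exact absurd h'' hne
  have hg2 : χ (g k ξ s) ^ 2 = 1 := by
    have := key _ _ (DRel.x2 (k := k) (ξ := ξ) (s := s))
    simp only [map_pow, map_sub, map_one, hgv, hxv, hx0] at this
    linear_combination this
  have ha4 : χ (a k ξ s) ^ 4 = 1 := by
    simpa [map_pow, hav] using key _ _ (DRel.a4 (k := k) (ξ := ξ) (s := s))
  have hξne : ξ ≠ 0 := hξ.ne_zero (by norm_num)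
  have hsne : s ≠ 0 := by
    intro h0; rw [h0] at hs; norm_num at hs
  have hd : χ (d k ξ s) = χ (g k ξ s) * χ (h k ξ s) * χ (a k ξ s) := by
    have := key _ _ (DRel.bx (k := k) (ξ := ξ) (s := s))
    simp only [map_add, map_mul, map_smul, map_sub, smul_eq_mul, hgv, hhv, hxv, hav, hbv, hdv,
      hb0, hx0] at this
    have h0 : s * ξ * (χ (d k ξ s) - χ (g k ξ s) * χ (h k ξ s) * χ (a k ξ s)) = 0 := by
      linear_combination -this
    rcases mul_eq_zero.mp h0 with h' | h'
    · exact absurd h' (mul_ne_zero hsne hξne)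
    · exact sub_eq_zero.mp h'
  exact ⟨hx0, hb0, hc0, hg2, h2, ha4, hd⟩
end

section
/- Under the hypotheses of the preceding definition of D, there are exactly 16 distinct algebra homomorphisms χ: D → k, parametrized by (i, j, k) with 0 ≤ i, j < 2, 0 ≤ k < 4, given by χ(g) = (-1)^i, χ(h) = (-1)^j, χ(x) = 0, χ(a) = ξ^k, χ(b) = χ(c) = 0, χ(d) = (-1)^i(-1)^j ξ^k. -/
theorem IsPrimitiveRoot.two_ne_zero_of_four {R : Type*} [CommRing R] [IsDomain R] {ζ : R}
    (hζ : IsPrimitiveRoot ζ 4) : (2 : R) ≠ 0 := by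
  have := hζ.neZero'
  intro h
  exact this.out (by push_cast; linear_combination 2 * h)

theorem exists_fin_two_eq_neg_one_pow {R : Type*} [Ring R] [NoZeroDivisors R] {r : R}
    (hr : r ^ 2 = 1) : ∃ i : Fin 2, r = (-1) ^ (i : ℕ) := by
  rcases sq_eq_one_iff.mp hr with rfl | rfl
  exacts [⟨0, by simp⟩, ⟨1, by simp⟩]

namespace DPresentation

variable {k : Type*} [Field k] {ξ s : k}

theorem algHom_ext {R : Type*} [Semiring R] [Algebra k R] {χ χ' : D k ξ s →ₐ[k] R}
    (hg : χ (g k ξ s) = χ' (g k ξ s)) (hh : χ (h k ξ s) = χ' (h k ξ s))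
    (hx : χ (x k ξ s) = χ' (x k ξ s)) (ha : χ (a k ξ s) = χ' (a k ξ s))
    (hb : χ (b k ξ s) = χ' (b k ξ s)) (hc : χ (c k ξ s) = χ' (c k ξ s))
    (hd : χ (d k ξ s) = χ' (d k ξ s)) : χ = χ' :=
  RingQuot.ringQuot_ext' k χ χ' <| FreeAlgebra.hom_ext <| funext fun i => by
    fin_cases i
    exacts [hg, hh, hx, ha, hb, hc, hd]

section Relations

variable (k ξ s)

theorem h_sq : h k ξ s ^ 2 = 1 := by
  have := RingQuot.mkAlgHom_rel k (s := DRel k ξ s) .h2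
  simp only [map_pow, map_one] at this
  exact this

theorem x_mul_h : x k ξ s * h k ξ s = -(h k ξ s * x k ξ s) := by
  have := RingQuot.mkAlgHom_rel k (s := DRel k ξ s) .xh
  simp only [map_mul, map_neg] at this
  exact this

theorem x_sq : x k ξ s ^ 2 = 1 - g k ξ s ^ 2 := by
  have := RingQuot.mkAlgHom_rel k (s := DRel k ξ s) .x2
  simp only [map_pow, map_sub, map_one] at this
  exact this

theorem a_pow_four : a k ξ s ^ 4 = 1 := by
  have := RingQuot.mkAlgHom_rel k (s := DRel k ξ s) .a4
  simp only [map_pow, map_one] at this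
  exact this

theorem b_sq : b k ξ s ^ 2 = 0 := by
  have := RingQuot.mkAlgHom_rel k (s := DRel k ξ s) .b2
  simp only [map_pow, map_zero] at this
  exact this

theorem c_sq : c k ξ s ^ 2 = 0 := by
  have := RingQuot.mkAlgHom_rel k (s := DRel k ξ s) .c2
  simp only [map_pow, map_zero] at this
  exact this

theorem b_mul_x_add_smul_x_mul_b : b k ξ s * x k ξ s + ξ • (x k ξ s * b k ξ s) =
    (s * ξ) • (d k ξ s - g k ξ s * h k ξ s * a k ξ s) := by
  have := RingQuot.mkAlgHom_rel k (s := DRel k ξ s) .bx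
  simp only [map_add, map_sub, map_mul, map_smul] at this
  exact this

end Relations

section Classification

variable (χ : D k ξ s →ₐ[k] k)

theorem apply_h_sq : χ (h k ξ s) ^ 2 = 1 := by
  simpa using congrArg χ (h_sq k ξ s)

theorem apply_x_eq_zero (h2 : (2 : k) ≠ 0) : χ (x k ξ s) = 0 := by
  have hxh : 2 * (χ (x k ξ s) * χ (h k ξ s)) = 0 := by
    have := congrArg χ (x_mul_h k ξ s)
    simp only [map_mul, map_neg] at this
    linear_combination this
  have hh : χ (h k ξ s) ≠ 0 := by
    intro h0
    simpa [h0] using apply_h_sq χ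
  simpa [h2, hh] using hxh

theorem apply_g_sq (h2 : (2 : k) ≠ 0) : χ (g k ξ s) ^ 2 = 1 := by
  have := congrArg χ (x_sq k ξ s)
  simp only [map_pow, map_sub, map_one, apply_x_eq_zero χ h2] at this
  linear_combination this

theorem apply_a_pow_four : χ (a k ξ s) ^ 4 = 1 := by
  simpa using congrArg χ (a_pow_four k ξ s)

theorem apply_b_eq_zero : χ (b k ξ s) = 0 := by
  simpa using congrArg χ (b_sq k ξ s)

theorem apply_c_eq_zero : χ (c k ξ s) = 0 := by
  simpa using congrArg χ (c_sq k ξ s)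

theorem apply_d_eq (hsξ : s * ξ ≠ 0) :
    χ (d k ξ s) = χ (g k ξ s) * χ (h k ξ s) * χ (a k ξ s) := by
  have := congrArg χ (b_mul_x_add_smul_x_mul_b k ξ s)
  simp only [map_add, map_sub, map_mul, map_smul, apply_b_eq_zero, smul_eq_mul] at this
  simpa [hsξ, sub_eq_zero] using this.symm

end Classification

section Character

variable (γ η α : k)

theorem lift_eq_of_dRel (hγ : γ ^ 2 = 1) (hη : η ^ 2 = 1) (hα : α ^ 4 = 1)
    {p q : FreeAlgebra k (Fin 7)} (hpq : DRel k ξ s p q) :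
    FreeAlgebra.lift k ![γ, η, 0, α, 0, 0, γ * η * α] p =
      FreeAlgebra.lift k ![γ, η, 0, α, 0, 0, γ * η * α] q := by
  induction hpq <;> simp [G, Hh, X, A, B, C, Dd] <;> grind

variable (hγ : γ ^ 2 = 1) (hη : η ^ 2 = 1) (hα : α ^ 4 = 1)

noncomputable def character : D k ξ s →ₐ[k] k :=
  RingQuot.liftAlgHom k ⟨_, fun _ _ => lift_eq_of_dRel γ η α hγ hη hα⟩

@[simp]
theorem character_mk (p : FreeAlgebra k (Fin 7)) :
    character γ η α hγ hη hα (RingQuot.mkAlgHom k (DRel k ξ s) p) =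
      FreeAlgebra.lift k ![γ, η, 0, α, 0, 0, γ * η * α] p :=
  RingQuot.liftAlgHom_mkAlgHom_apply k _ _ p

@[simp]
theorem character_g : character γ η α hγ hη hα (g k ξ s) = γ := by simp [g, G]

@[simp]
theorem character_h : character γ η α hγ hη hα (h k ξ s) = η := by simp [h, Hh]

@[simp]
theorem character_x : character γ η α hγ hη hα (x k ξ s) = 0 := by simp [x, X]

@[simp]
theorem character_a : character γ η α hγ hη hα (a k ξ s) = α := by simp [a, A]

@[simp]
theorem character_b : character γ η α hγ hη hα (b k ξ s) = 0 := by simp [b, B]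

@[simp]
theorem character_c : character γ η α hγ hη hα (c k ξ s) = 0 := by simp [c, C]

@[simp]
theorem character_d : character γ η α hγ hη hα (d k ξ s) = γ * η * α := by simp [d, Dd]

end Character

end DPresentation

open DPresentation

theorem stmt8_general (k : Type*) [Field k]
    (ξ : k) (hξ : IsPrimitiveRoot ξ 4) (s : k) (hs : s ^ 2 = 2) :
    (∀ i j : Fin 2, ∀ m : Fin 4, ∃! χ : D k ξ s →ₐ[k] k,
      χ (g k ξ s) = (-1 : k) ^ (i : ℕ) ∧ χ (h k ξ s) = (-1 : k) ^ (j : ℕ) ∧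
      χ (x k ξ s) = 0 ∧ χ (a k ξ s) = ξ ^ (m : ℕ) ∧
      χ (b k ξ s) = 0 ∧ χ (c k ξ s) = 0 ∧
      χ (d k ξ s) = (-1 : k) ^ (i : ℕ) * (-1 : k) ^ (j : ℕ) * ξ ^ (m : ℕ)) ∧
    (∀ χ : D k ξ s →ₐ[k] k, ∃ i j : Fin 2, ∃ m : Fin 4,
      χ (g k ξ s) = (-1 : k) ^ (i : ℕ) ∧ χ (h k ξ s) = (-1 : k) ^ (j : ℕ) ∧
      χ (x k ξ s) = 0 ∧ χ (a k ξ s) = ξ ^ (m : ℕ) ∧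
      χ (b k ξ s) = 0 ∧ χ (c k ξ s) = 0 ∧
      χ (d k ξ s) = (-1 : k) ^ (i : ℕ) * (-1 : k) ^ (j : ℕ) * ξ ^ (m : ℕ)) := by
  have h2 : (2 : k) ≠ 0 := hξ.two_ne_zero_of_four
  have hsξ : s * ξ ≠ 0 :=
    mul_ne_zero (ne_zero_pow two_ne_zero (by rwa [hs])) (hξ.ne_zero four_ne_zero)
  have hsign (n : ℕ) : ((-1 : k) ^ n) ^ 2 = 1 := by rw [pow_right_comm, neg_one_sq, one_pow]
  refine ⟨fun i j m => ?_, fun χ => ?_⟩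
  · refine ⟨character ((-1) ^ (i : ℕ)) ((-1) ^ (j : ℕ)) (ξ ^ (m : ℕ))
      (hsign i) (hsign j) (by rw [pow_right_comm, hξ.pow_eq_one, one_pow]), by simp, ?_⟩
    rintro ψ ⟨hg, hh, hx, ha, hb, hc, hd⟩
    apply algHom_ext <;> simp [*]
  · obtain ⟨i, hi⟩ := exists_fin_two_eq_neg_one_pow (apply_g_sq χ h2)
    obtain ⟨j, hj⟩ := exists_fin_two_eq_neg_one_pow (apply_h_sq χ)
    obtain ⟨m, hm, hma⟩ := hξ.eq_pow_of_pow_eq_one (apply_a_pow_four χ)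
    refine ⟨i, j, ⟨m, hm⟩, hi, hj, apply_x_eq_zero χ h2, hma.symm, apply_b_eq_zero χ,
      apply_c_eq_zero χ, ?_⟩
    rw [apply_d_eq χ hsξ, hi, hj, hma]

/-- There are exactly 16 algebra homomorphisms `χ : D → k`, parametrized by
`(i, j, m)` with `0 ≤ i, j < 2`, `0 ≤ m < 4`, via `χ(g) = (-1)^i`, `χ(h) = (-1)^j`,
`χ(x) = 0`, `χ(a) = ξ^m`, `χ(b) = χ(c) = 0`, `χ(d) = (-1)^i(-1)^j ξ^m`. -/
theorem stmt8 (k : Type*) [Field k] [IsAlgClosed k] [CharZero k]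
    (ξ : k) (hξ : IsPrimitiveRoot ξ 4) (s : k) (hs : s ^ 2 = 2) :
    (∀ i j : Fin 2, ∀ m : Fin 4, ∃! χ : D k ξ s →ₐ[k] k,
      χ (g k ξ s) = (-1 : k) ^ (i : ℕ) ∧ χ (h k ξ s) = (-1 : k) ^ (j : ℕ) ∧
      χ (x k ξ s) = 0 ∧ χ (a k ξ s) = ξ ^ (m : ℕ) ∧
      χ (b k ξ s) = 0 ∧ χ (c k ξ s) = 0 ∧
      χ (d k ξ s) = (-1 : k) ^ (i : ℕ) * (-1 : k) ^ (j : ℕ) * ξ ^ (m : ℕ)) ∧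
    (∀ χ : D k ξ s →ₐ[k] k, ∃ i j : Fin 2, ∃ m : Fin 4,
      χ (g k ξ s) = (-1 : k) ^ (i : ℕ) ∧ χ (h k ξ s) = (-1 : k) ^ (j : ℕ) ∧
      χ (x k ξ s) = 0 ∧ χ (a k ξ s) = ξ ^ (m : ℕ) ∧
      χ (b k ξ s) = 0 ∧ χ (c k ξ s) = 0 ∧
      χ (d k ξ s) = (-1 : k) ^ (i : ℕ) * (-1 : k) ^ (j : ℕ) * ξ ^ (m : ℕ)) :=
  stmt8_general k ξ hξ s hs
end

section
/- Fix λ_1, λ_2, λ_3, λ_4 in k with λ_1^4 = 1, λ_2 ∈ {ξ, ξ^3}, λ_3^2 = 1, λ_4^2 = 1. Then the 2×2 matrices [a] = diag(-λ_4λ_1, ξλ_4λ_1), [d] = diag(λ_1, ξλ_1), [b] = [[0, λ_4],[0,0]], [c] = [[0,1],[0,0]], [g] = λ_2·I, [h] = diag(λ_3, -λ_3), [x] = [[0, (√2/2)ξλ_1^3(λ_2λ_3 - λ_4)],[√2ξλ_1(λ_2λ_3 + λ_4), 0]] satisfy all the defining relations of the Drinfeld double D, hence define a 2-dimensional representation of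 D. -/
open DPresentation

set_option maxHeartbeats 2000000 in
/-- The explicit 2×2 matrices satisfy all defining relations of the Drinfeld
double `D`, i.e. they define a 2-dimensional representation of `D`. -/
theorem stmt9 (k : Type*) [Field k] [IsAlgClosed k] [CharZero k]
    (ξ : k) (hξ : IsPrimitiveRoot ξ 4) (s : k) (hs : s ^ 2 = 2)
    (l1 l2 l3 l4 : k) (h1 : l1 ^ 4 = 1) (h2 : l2 = ξ ∨ l2 = ξ ^ 3)
    (h3 : l3 ^ 2 = 1) (h4 : l4 ^ 2 = 1) :
    ∃ ρ : D k ξ s →ₐ[k] Matrix (Fin 2) (Fin 2) k,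
      ρ (a k ξ s) = !![-l4 * l1, 0; 0, ξ * l4 * l1] ∧
      ρ (d k ξ s) = !![l1, 0; 0, ξ * l1] ∧
      ρ (b k ξ s) = !![0, l4; 0, 0] ∧
      ρ (c k ξ s) = !![0, 1; 0, 0] ∧
      ρ (g k ξ s) = !![l2, 0; 0, l2] ∧
      ρ (h k ξ s) = !![l3, 0; 0, -l3] ∧
      ρ (x k ξ s) = !![0, (s / 2) * ξ * l1 ^ 3 * (l2 * l3 - l4);
                       s * ξ * l1 * (l2 * l3 + l4), 0] := by
  have hξ4 : ξ ^ 4 = 1 := hξ.pow_eq_one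
  have hξ2 : ξ ^ 2 = -1 := by
    have hne : ξ ^ 2 ≠ 1 := hξ.pow_ne_one_of_pos_of_lt (by norm_num) (by norm_num)
    have hz : (ξ ^ 2 - 1) * (ξ ^ 2 + 1) = 0 := by linear_combination hξ4
    rcases mul_eq_zero.mp hz with hz | hz
    · exact absurd (by linear_combination hz) hne
    · linear_combination hz
  have hξ3 : ξ ^ 3 = -ξ := by linear_combination ξ * hξ2
  have hl2 : l2 ^ 2 = -1 := by
    rcases h2 with rfl | rfl
    · exact hξ2
    · linear_combination ξ ^ 2 * hξ4 + hξ2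
  have hl24 : l2 ^ 4 = 1 := by linear_combination (l2 ^ 2 - 1) * hl2
  have hl44 : l4 ^ 4 = 1 := by linear_combination (l4 ^ 2 + 1) * h4
  let am : Matrix (Fin 2) (Fin 2) k := !![-l4 * l1, 0; 0, ξ * l4 * l1]
  let dm : Matrix (Fin 2) (Fin 2) k := !![l1, 0; 0, ξ * l1]
  let bm : Matrix (Fin 2) (Fin 2) k := !![0, l4; 0, 0]
  let cm : Matrix (Fin 2) (Fin 2) k := !![0, 1; 0, 0]
  let gm : Matrix (Fin 2) (Fin 2) k := !![l2, 0; 0, l2]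
  let hm : Matrix (Fin 2) (Fin 2) k := !![l3, 0; 0, -l3]
  let xm : Matrix (Fin 2) (Fin 2) k := !![0, (s / 2) * ξ * l1 ^ 3 * (l2 * l3 - l4);
                       s * ξ * l1 * (l2 * l3 + l4), 0]
  let φ : FreeAlgebra k (Fin 7) →ₐ[k] Matrix (Fin 2) (Fin 2) k :=
    FreeAlgebra.lift k ![gm, hm, xm, am, bm, cm, dm]
  have hG : φ (G k) = gm := FreeAlgebra.lift_ι_apply ..
  have hH : φ (Hh k) = hm := FreeAlgebra.lift_ι_apply ..
  have hX : φ (X k) = xm := FreeAlgebra.lift_ι_apply ..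
  have hA : φ (A k) = am := FreeAlgebra.lift_ι_apply ..
  have hB : φ (B k) = bm := FreeAlgebra.lift_ι_apply ..
  have hC : φ (C k) = cm := FreeAlgebra.lift_ι_apply ..
  have hD : φ (Dd k) = dm := FreeAlgebra.lift_ι_apply ..
  have key : ∀ u v, DRel k ξ s u v → φ u = φ v := by
    intro u v r
    induction r <;>
      simp only [map_mul, map_pow, map_add, map_sub, map_neg, map_one, map_zero, map_smul,
        hG, hH, hX, hA, hB, hC, hD] <;>
    · ext i j
      fin_cases i <;> fin_cases j <;>
        simp only [am, dm, bm, cm, gm, hm, xm, pow_succ, pow_zero, one_mul,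
          Matrix.mul_apply, Fin.sum_univ_two, Matrix.smul_apply, Matrix.sub_apply,
          Matrix.add_apply, Matrix.neg_apply, Matrix.one_apply, Matrix.zero_apply,
          Matrix.cons_val', Matrix.cons_val_zero, Matrix.cons_val_one, Matrix.head_cons,
          Matrix.head_fin_const, Matrix.empty_val', Matrix.cons_val_fin_one, smul_eq_mul,
          Fin.zero_eta, Fin.mk_one, if_true, if_false, eq_self_iff_true, Fin.isValue,
          Matrix.of_apply, one_ne_zero, zero_ne_one, ite_true, ite_false, reduceIte] <;>
        ring_nf <;>
        (try simp only [hξ2, hξ3, hξ4, hs, h1, hl2, hl24, h3, h4, hl44]) <;>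
        (try norm_num) <;>
        (try ring_nf) <;>
        (try simp [hξ2, hξ3, hξ4, hs, h1, hl2, hl24, h3, h4, hl44]) <;>
        (try norm_num)
  refine ⟨RingQuot.liftAlgHom k ⟨φ, fun {u v} r => key u v r⟩, ?_, ?_, ?_, ?_, ?_, ?_, ?_⟩
  · exact (RingQuot.liftAlgHom_mkAlgHom_apply k φ _ _).trans hA
  · exact (RingQuot.liftAlgHom_mkAlgHom_apply k φ _ _).trans hD
  · exact (RingQuot.liftAlgHom_mkAlgHom_apply k φ _ _).trans hB
  · exact (RingQuot.liftAlgHom_mkAlgHom_apply k φ _ _).trans hC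
  · exact (RingQuot.liftAlgHom_mkAlgHom_apply k φ _ _).trans hG
  · exact (RingQuot.liftAlgHom_mkAlgHom_apply k φ _ _).trans hH
  · exact (RingQuot.liftAlgHom_mkAlgHom_apply k φ _ _).trans hX
end

section
/- The 2-dimensional representation V_{i,j,k,ι} of D defined by the matrices in the preceding statement (with λ_1 = ξ^i, λ_2 = ξ^j for j ∈ {1,3}, λ_3 = (-1)^k, λ_4 = (-1)^ι) is irreducible. -/
/- The seven matrices of the 2-dimensional representation `V_{i,j,k,ι}` of the
Drinfeld double `D`, acting by the generators g, h, x, a, b, c, d (in this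
order), with `λ₁ = ξ^i`, `λ₂ = ξ^j`, `λ₃ = (-1)^k`, `λ₄ = (-1)^ι`. -/
noncomputable def Mrep (k : Type*) [Field k] (ξ s : k) (i j m ι : ℕ) :
    Fin 7 → Matrix (Fin 2) (Fin 2) k :=
  let l1 : k := ξ ^ i
  let l2 : k := ξ ^ j
  let l3 : k := (-1 : k) ^ m
  let l4 : k := (-1 : k) ^ ι
  ![!![l2, 0; 0, l2],
    !![l3, 0; 0, -l3],
    !![0, (s / 2) * ξ * l1 ^ 3 * (l2 * l3 - l4); s * ξ * l1 * (l2 * l3 + l4), 0],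
    !![-l4 * l1, 0; 0, ξ * l4 * l1],
    !![0, l4; 0, 0],
    !![0, 1; 0, 0],
    !![l1, 0; 0, ξ * l1]]

/-- The 2-dimensional representation `V_{i,j,k,ι}` of `D` (with `j ∈ {1,3}`)
is irreducible: no nonzero proper subspace of `k²` is invariant under all
seven matrices. -/
theorem stmt10 (k : Type*) [Field k] [IsAlgClosed k] [CharZero k]
    (ξ : k) (hξ : IsPrimitiveRoot ξ 4) (s : k) (hs : s ^ 2 = 2)
    (i : Fin 4) (j : Fin 4) (hj : j = 1 ∨ j = 3) (m ι : Fin 2)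
    (W : Submodule k (Fin 2 → k))
    (hW : ∀ z : Fin 7, ∀ w ∈ W,
      (Mrep k ξ s (i : ℕ) (j : ℕ) (m : ℕ) (ι : ℕ) z).mulVec w ∈ W) :
    W = ⊥ ∨ W = ⊤ := by
  by_cases hbot : W = ⊥
  · exact Or.inl hbot
  right
  -- basic facts
  have hξ4 : ξ ^ 4 = 1 := hξ.pow_eq_one
  have hξ0 : ξ ≠ 0 := hξ.ne_zero (by norm_num)
  have hs0 : s ≠ 0 := by
    intro h; rw [h] at hs; norm_num at hs
  have hξ2 : ξ ^ 2 = -1 := by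
    have hne : ξ ^ 2 ≠ 1 := hξ.pow_ne_one_of_pos_of_lt (by norm_num) (by norm_num)
    have hprod : (ξ ^ 2 - 1) * (ξ ^ 2 + 1) = 0 := by linear_combination hξ4
    rcases mul_eq_zero.1 hprod with h | h
    · exact absurd (by linear_combination h) hne
    · linear_combination h
  have hl2sq : (ξ ^ (j : ℕ)) ^ 2 = -1 := by
    rcases hj with h | h <;> rw [h]
    · simpa using hξ2
    · show (ξ ^ ((3 : Fin 4) : ℕ)) ^ 2 = -1
      have : ((3 : Fin 4) : ℕ) = 3 := rfl
      rw [this, ← pow_mul]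
      have : ξ ^ 6 = ξ ^ 4 * ξ ^ 2 := by ring
      rw [show 3 * 2 = 6 by norm_num, this, hξ4, one_mul, hξ2]
  have hmsq : ((-1 : k) ^ (m : ℕ)) ^ 2 = 1 := by
    rw [← pow_mul, mul_comm, pow_mul, neg_one_sq, one_pow]
  have hιsq : ((-1 : k) ^ (ι : ℕ)) ^ 2 = 1 := by
    rw [← pow_mul, mul_comm, pow_mul, neg_one_sq, one_pow]
  have hbr : ξ ^ (j : ℕ) * (-1 : k) ^ (m : ℕ) + (-1 : k) ^ (ι : ℕ) ≠ 0 := by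
    intro h
    have hsq : (ξ ^ (j : ℕ)) ^ 2 * ((-1 : k) ^ (m : ℕ)) ^ 2 = ((-1 : k) ^ (ι : ℕ)) ^ 2 := by
      linear_combination (ξ ^ (j : ℕ) * (-1 : k) ^ (m : ℕ) - (-1 : k) ^ (ι : ℕ)) * h
    rw [hl2sq, hmsq, hιsq] at hsq
    norm_num at hsq
  have hβ : s * ξ * ξ ^ (i : ℕ) * (ξ ^ (j : ℕ) * (-1 : k) ^ (m : ℕ) + (-1 : k) ^ (ι : ℕ)) ≠ 0 := by
    exact mul_ne_zero (mul_ne_zero (mul_ne_zero hs0 hξ0) (pow_ne_zero _ hξ0)) hbr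
  -- get a nonzero vector in W
  obtain ⟨w, hwW, hw0⟩ := Submodule.ne_bot_iff W |>.1 hbot
  -- first basis vector in W
  have he0 : (![1, 0] : Fin 2 → k) ∈ W := by
    by_cases h1 : w 1 = 0
    · have h0 : w 0 ≠ 0 := by
        intro h0; apply hw0; funext x; fin_cases x <;> simp [h0, h1]
      have : (w 0)⁻¹ • w = ![1, 0] := by
        funext x; fin_cases x <;> simp [h0, h1, inv_mul_cancel₀]
      rw [← this]; exact W.smul_mem _ hwW
    · have hc := hW 5 w hwW
      have hM5 : Mrep k ξ s (i : ℕ) (j : ℕ) (m : ℕ) (ι : ℕ) 5 = !![0, 1; 0, 0] := rfl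
      have hcv : (Mrep k ξ s (i : ℕ) (j : ℕ) (m : ℕ) (ι : ℕ) 5).mulVec w = ![w 1, 0] := by
        rw [hM5]; funext x
        fin_cases x <;>
          simp [Matrix.mulVec, dotProduct, Fin.sum_univ_two]
      rw [hcv] at hc
      have : (w 1)⁻¹ • (![w 1, 0] : Fin 2 → k) = ![1, 0] := by
        funext x; fin_cases x <;> simp [h1, inv_mul_cancel₀]
      rw [← this]; exact W.smul_mem _ hc
  -- second basis vector in W
  set β : k := s * ξ * ξ ^ (i : ℕ) * (ξ ^ (j : ℕ) * (-1 : k) ^ (m : ℕ) + (-1 : k) ^ (ι : ℕ))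
    with hβdef
  have he1 : (![0, 1] : Fin 2 → k) ∈ W := by
    have hx := hW 2 _ he0
    have hM2 : Mrep k ξ s (i : ℕ) (j : ℕ) (m : ℕ) (ι : ℕ) 2 =
        !![0, (s / 2) * ξ * (ξ ^ (i : ℕ)) ^ 3 * (ξ ^ (j : ℕ) * (-1 : k) ^ (m : ℕ) - (-1 : k) ^ (ι : ℕ));
          s * ξ * ξ ^ (i : ℕ) * (ξ ^ (j : ℕ) * (-1 : k) ^ (m : ℕ) + (-1 : k) ^ (ι : ℕ)), 0] := rfl
    have hxv : (Mrep k ξ s (i : ℕ) (j : ℕ) (m : ℕ) (ι : ℕ) 2).mulVec ![1, 0] = ![0, β] := by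
      rw [hM2]; funext x
      fin_cases x <;>
        simp [Matrix.mulVec, dotProduct, Fin.sum_univ_two, hβdef]
    rw [hxv] at hx
    have : β⁻¹ • (![0, β] : Fin 2 → k) = ![0, 1] := by
      funext x; fin_cases x <;> simp [hβ, inv_mul_cancel₀]
    rw [← this]; exact W.smul_mem _ hx
  -- conclude
  rw [Submodule.eq_top_iff']
  intro v
  have hv : v = v 0 • ![1, 0] + v 1 • ![0, 1] := by
    funext x; fin_cases x <;> simp
  rw [hv]
  exact W.add_mem (W.smul_mem _ he0) (W.smul_mem _ he1)
end

section
/- Two of the 2-dimensional D-representations V_{i,j,k,ι} and V_{p,q,r,κ} (with parameters as above) are isomorphic if and only if (i, j, k, ι) = (p, q, r, κ). Consequently, any 2×2 matrix Φ intertwining the two representations with equal parameters is a scalar multiple of the identity. -/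
section aux
variable (k : Type*) [Field k] (ξ s : k) (i j m ι : ℕ)

lemma Mrep0 : Mrep k ξ s i j m ι 0 = !![ξ^j, 0; 0, ξ^j] := rfl
lemma Mrep1 : Mrep k ξ s i j m ι 1 = !![(-1:k)^m, 0; 0, -(-1:k)^m] := rfl
lemma Mrep3 : Mrep k ξ s i j m ι 3 =
    !![-(-1:k)^ι * ξ^i, 0; 0, ξ * (-1:k)^ι * ξ^i] := rfl
lemma Mrep4 : Mrep k ξ s i j m ι 4 = !![0, (-1:k)^ι; 0, 0] := rfl
lemma Mrep5 : Mrep k ξ s i j m ι 5 = !![0, 1; 0, 0] := rfl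
lemma Mrep6 : Mrep k ξ s i j m ι 6 = !![ξ^i, 0; 0, ξ * ξ^i] := rfl

end aux

lemma negpow_inj (k : Type*) [Field k] [CharZero k] (m r : Fin 2)
    (h : (-1 : k) ^ (m : ℕ) = (-1 : k) ^ (r : ℕ)) : m = r := by
  fin_cases m <;> fin_cases r <;> first | rfl | (exfalso; norm_num at h)

/-- `V_{i,j,k,ι} ≅ V_{p,q,r,κ}` if and only if `(i,j,k,ι) = (p,q,r,κ)`;
moreover any intertwiner of `V_{i,j,k,ι}` with itself is a scalar matrix. -/
theorem stmt11 (k : Type*) [Field k] [IsAlgClosed k] [CharZero k]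
    (ξ : k) (hξ : IsPrimitiveRoot ξ 4) (s : k) (hs : s ^ 2 = 2)
    (i p : Fin 4) (j q : Fin 4) (hj : j = 1 ∨ j = 3) (hq : q = 1 ∨ q = 3)
    (m r ι κ : Fin 2) :
    ((∃ Φ : Matrix (Fin 2) (Fin 2) k, IsUnit Φ ∧ ∀ z : Fin 7,
        Mrep k ξ s (p : ℕ) (q : ℕ) (r : ℕ) (κ : ℕ) z * Φ =
          Φ * Mrep k ξ s (i : ℕ) (j : ℕ) (m : ℕ) (ι : ℕ) z) ↔
      (i = p ∧ j = q ∧ m = r ∧ ι = κ)) ∧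
    (∀ Φ : Matrix (Fin 2) (Fin 2) k,
      (∀ z : Fin 7, Mrep k ξ s (i : ℕ) (j : ℕ) (m : ℕ) (ι : ℕ) z * Φ =
        Φ * Mrep k ξ s (i : ℕ) (j : ℕ) (m : ℕ) (ι : ℕ) z) →
      ∃ μ : k, Φ = μ • (1 : Matrix (Fin 2) (Fin 2) k)) := by
  have hξ0 : ξ ≠ 0 := hξ.ne_zero (by norm_num)
  have hξn1 : ξ ≠ -1 := by
    intro h
    have := hξ.dvd_of_pow_eq_one 2 (by rw [h]; ring)
    omega
  constructor
  · constructor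
    · rintro ⟨Φ, hU, h⟩
      -- from z = 5 : Φ 1 0 = 0 and Φ 1 1 = Φ 0 0
      have h5 := h 5
      rw [Mrep5, Mrep5] at h5
      have hc : Φ 1 0 = 0 := by
        have := congrFun (congrFun h5 1) 1
        simpa [Matrix.mul_apply, Fin.sum_univ_two] using this.symm
      have hd : Φ 1 1 = Φ 0 0 := by
        have := congrFun (congrFun h5 0) 1
        simpa [Matrix.mul_apply, Fin.sum_univ_two] using this
      -- Φ 0 0 ≠ 0
      have ha : Φ 0 0 ≠ 0 := by
        have hdet : IsUnit Φ.det := (Matrix.isUnit_iff_isUnit_det Φ).mp hU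
        rw [Matrix.det_fin_two, hc, hd] at hdet
        intro h0
        rw [h0] at hdet
        simp at hdet
      refine ⟨?_, ?_, ?_, ?_⟩
      · -- from z = 6
        have h6 := h 6
        rw [Mrep6, Mrep6] at h6
        have e := congrFun (congrFun h6 0) 0
        simp [Matrix.mul_apply, Fin.sum_univ_two] at e
        have e' : ξ ^ (i : ℕ) = ξ ^ (p : ℕ) :=
          mul_right_cancel₀ ha (by linear_combination -e)
        exact Fin.ext (hξ.pow_inj i.isLt p.isLt e')
      · -- from z = 0
        have h0 := h 0
        rw [Mrep0, Mrep0] at h0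
        have e := congrFun (congrFun h0 0) 0
        simp [Matrix.mul_apply, Fin.sum_univ_two] at e
        have e' : ξ ^ (j : ℕ) = ξ ^ (q : ℕ) :=
          mul_right_cancel₀ ha (by linear_combination -e)
        exact Fin.ext (hξ.pow_inj j.isLt q.isLt e')
      · -- from z = 1
        have h1 := h 1
        rw [Mrep1, Mrep1] at h1
        have e := congrFun (congrFun h1 0) 0
        simp [Matrix.mul_apply, Fin.sum_univ_two] at e
        have e' : (-1 : k) ^ (m : ℕ) = (-1 : k) ^ (r : ℕ) :=
          mul_right_cancel₀ ha (by linear_combination -e)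
        exact negpow_inj k m r e'
      · -- from z = 4
        have h4 := h 4
        rw [Mrep4, Mrep4] at h4
        have e := congrFun (congrFun h4 0) 1
        simp [Matrix.mul_apply, Fin.sum_univ_two, hd] at e
        have e' : (-1 : k) ^ (ι : ℕ) = (-1 : k) ^ (κ : ℕ) :=
          mul_right_cancel₀ ha (by linear_combination -e)
        exact negpow_inj k ι κ e'
    · rintro ⟨rfl, rfl, rfl, rfl⟩
      exact ⟨1, isUnit_one, fun z => by simp⟩
  · intro Φ h
    have h5 := h 5
    rw [Mrep5] at h5
    have hc : Φ 1 0 = 0 := by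
      have := congrFun (congrFun h5 1) 1
      simpa [Matrix.mul_apply, Fin.sum_univ_two] using this.symm
    have hd : Φ 1 1 = Φ 0 0 := by
      have := congrFun (congrFun h5 0) 1
      simpa [Matrix.mul_apply, Fin.sum_univ_two] using this
    have hb : Φ 0 1 = 0 := by
      have h3 := h 3
      rw [Mrep3] at h3
      have e := congrFun (congrFun h3 0) 1
      simp [Matrix.mul_apply, Fin.sum_univ_two, hc] at e
      have key : Φ 0 1 * ((-1 : k) ^ (ι : ℕ) * ξ ^ (i : ℕ)) * (ξ + 1) = 0 := by
        linear_combination -e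
      have h1 : ((-1 : k) ^ (ι : ℕ) * ξ ^ (i : ℕ)) ≠ 0 :=
        mul_ne_zero (pow_ne_zero _ (by norm_num)) (pow_ne_zero _ hξ0)
      have h2 : (ξ + 1) ≠ 0 := fun hh => hξn1 (by linear_combination hh)
      rcases mul_eq_zero.mp key with key | key
      · rcases mul_eq_zero.mp key with key | key
        · exact key
        · exact absurd key h1
      · exact absurd key h2
    refine ⟨Φ 0 0, ?_⟩
    ext u v
    fin_cases u <;> fin_cases v <;>
      simp [hb, hc, hd, Matrix.one_apply]
end

section
/- Let B be the k-algebra k⟨v_1, v_2⟩/(v_1^2, v_1v_2 - ξ^j v_2v_1, v_2^4) where ξ is a primitive 4th root of unity and j ∈ {1, 3}. Then B has dimension 8 over k, with basis {v_2^m v_1^n : 0 ≤ m ≤ 3, 0 ≤ n ≤ 1}. -/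
/-!
Write `x = v₁`, `y = v₂` and `c = ξ ^ j`. Since `x * y = c • (y * x)`, `x ^ 2 = 0` and `y ^ 4 = 0`,
every product of generators is a scalar multiple of a monomial `y ^ m * x ^ n` with `m < 4`,
`n < 2`, so these eight monomials span. Their independence is detected by a representation: on
`k[s]/(s⁴) ⊗ k[t]/(t²)` let `y` act by multiplication by `s` and `x` by
`f(s) ⊗ g(t) ↦ f(c s) ⊗ t g(t)`; then `y ^ m * x ^ n` sends `1 ⊗ 1` to the basis vector
`s ^ m ⊗ t ^ n`.
-/

/- Relations of the Nichols algebra `B = k⟨v₁,v₂⟩/(v₁², v₁v₂ - ξ^j v₂v₁, v₂⁴)`,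
with generators v₁ (= 0) and v₂ (= 1). -/
inductive BRel (k : Type*) [Field k] (ξ : k) (j : ℕ) :
    FreeAlgebra k (Fin 2) → FreeAlgebra k (Fin 2) → Prop
  | r1 : BRel k ξ j ((FreeAlgebra.ι k (0 : Fin 2)) ^ 2) 0
  | r2 : BRel k ξ j (FreeAlgebra.ι k (0 : Fin 2) * FreeAlgebra.ι k (1 : Fin 2))
      (ξ ^ j • (FreeAlgebra.ι k (1 : Fin 2) * FreeAlgebra.ι k (0 : Fin 2)))
  | r3 : BRel k ξ j ((FreeAlgebra.ι k (1 : Fin 2)) ^ 4) 0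

noncomputable section

open Polynomial TensorProduct

section QuantumPlaneRelations

variable {k A : Type*} [CommSemiring k] [Semiring A] [Algebra k A] {c : k} {x y : A}

theorem mul_pow_eq_smul_pow_mul (hxy : x * y = c • (y * x)) (m : ℕ) :
    x * y ^ m = c ^ m • (y ^ m * x) := by
  induction m with
  | zero => simp
  | succ m ih =>
    rw [pow_succ, ← mul_assoc, ih, smul_mul_assoc, mul_assoc, hxy, mul_smul_comm, smul_smul,
      ← mul_assoc, ← pow_succ, pow_succ c]

theorem pow_mul_pow_eq_smul_pow_mul_pow (hxy : x * y = c • (y * x)) (n m : ℕ) :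
    x ^ n * y ^ m = c ^ (n * m) • (y ^ m * x ^ n) := by
  induction n with
  | zero => simp
  | succ n ih =>
    rw [pow_succ, mul_assoc, mul_pow_eq_smul_pow_mul hxy, mul_smul_comm, ← mul_assoc, ih,
      smul_mul_assoc, smul_smul, mul_assoc, ← pow_succ, ← pow_add, add_comm, add_one_mul]

theorem pow_mul_pow_mul_pow_mul_pow_eq_smul (hxy : x * y = c • (y * x)) (m n m' n' : ℕ) :
    (y ^ m * x ^ n) * (y ^ m' * x ^ n') = c ^ (n * m') • (y ^ (m + m') * x ^ (n + n')) := by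
  rw [mul_assoc, ← mul_assoc (x ^ n), pow_mul_pow_eq_smul_pow_mul_pow hxy, smul_mul_assoc,
    mul_smul_comm, pow_add, pow_add]
  simp only [mul_assoc]

variable {a b : ℕ}

theorem pow_mul_pow_mem_span (hx : x ^ a = 0) (hy : y ^ b = 0) (m n : ℕ) :
    y ^ m * x ^ n ∈
      Submodule.span k (Set.range fun p : Fin b × Fin a => y ^ (p.1 : ℕ) * x ^ (p.2 : ℕ)) := by
  by_cases hm : m < b
  · by_cases hn : n < a
    · exact Submodule.subset_span ⟨(⟨m, hm⟩, ⟨n, hn⟩), rfl⟩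
    · rw [pow_eq_zero_of_le (not_lt.1 hn) hx, mul_zero]
      exact zero_mem _
  · rw [pow_eq_zero_of_le (not_lt.1 hm) hy, zero_mul]
    exact zero_mem _

theorem span_pow_mul_pow_eq_top (hx : x ^ a = 0) (hy : y ^ b = 0) (hxy : x * y = c • (y * x))
    (hgen : Algebra.adjoin k {x, y} = ⊤) :
    Submodule.span k (Set.range fun p : Fin b × Fin a => y ^ (p.1 : ℕ) * x ^ (p.2 : ℕ)) = ⊤ := by
  set S := Submodule.span k (Set.range fun p : Fin b × Fin a => y ^ (p.1 : ℕ) * x ^ (p.2 : ℕ))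
  have hmul : S * S ≤ S := by
    rw [Submodule.span_mul_span, Submodule.span_le, Set.mul_subset_iff]
    rintro _ ⟨p, rfl⟩ _ ⟨q, rfl⟩
    rw [pow_mul_pow_mul_pow_mul_pow_eq_smul hxy]
    exact Submodule.smul_mem _ _ (pow_mul_pow_mem_span hx hy _ _)
  let T : Subalgebra k A := S.toSubalgebra (by simpa using pow_mul_pow_mem_span hx hy 0 0)
    fun u v hu hv => hmul (Submodule.mul_mem_mul hu hv)
  have hT : Algebra.adjoin k {x, y} ≤ T := by
    refine Algebra.adjoin_le (Set.insert_subset_iff.2 ⟨?_, Set.singleton_subset_iff.2 ?_⟩)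
    · show x ∈ S
      simpa using pow_mul_pow_mem_span hx hy 0 1
    · show y ∈ S
      simpa using pow_mul_pow_mem_span hx hy 1 0
  rw [hgen, top_le_iff] at hT
  exact eq_top_iff.2 fun u _ => show u ∈ T from hT ▸ Algebra.mem_top

end QuantumPlaneRelations

abbrev TruncPoly (k : Type*) [CommRing k] (n : ℕ) := AdjoinRoot (X ^ n : k[X])

namespace TruncPoly

variable (k : Type*) [CommRing k] (n : ℕ)

abbrev root : TruncPoly k n := AdjoinRoot.root (X ^ n)

def basis [Nontrivial k] : Module.Basis (Fin n) k (TruncPoly k n) :=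
  (AdjoinRoot.powerBasis' (monic_X_pow n)).basis.reindex (finCongr (natDegree_X_pow n))

variable {k n}

theorem root_pow_eq_zero : root k n ^ n = 0 := by
  simpa using AdjoinRoot.eval₂_root (X ^ n : k[X])

theorem basis_apply [Nontrivial k] (i : Fin n) : basis k n i = root k n ^ (i : ℕ) := by
  rw [basis, Module.Basis.reindex_apply, PowerBasis.basis_eq_pow]
  rfl

def scaleRoot (c : k) : TruncPoly k n →ₐ[k] TruncPoly k n :=
  AdjoinRoot.liftAlgHom _ (Algebra.ofId k _) (c • root k n)
    (by simp [_root_.smul_pow, root_pow_eq_zero])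

theorem scaleRoot_root (c : k) : scaleRoot c (root k n) = c • root k n :=
  AdjoinRoot.liftAlgHom_root ..

end TruncPoly

namespace TruncQuantumPlane

open TruncPoly

variable {k : Type*} [CommRing k]

def opX (c : k) (a b : ℕ) : Module.End k (TruncPoly k b ⊗[k] TruncPoly k a) :=
  map (scaleRoot c).toLinearMap (LinearMap.mulLeft k (root k a))

variable (k) in
def opY (a b : ℕ) : Module.End k (TruncPoly k b ⊗[k] TruncPoly k a) :=
  map (LinearMap.mulLeft k (root k b)) 1

variable {a b : ℕ}

theorem opX_pow_eq_zero (c : k) : opX c a b ^ a = 0 := by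
  rw [opX, TensorProduct.map_pow, LinearMap.pow_mulLeft, root_pow_eq_zero,
    LinearMap.mulLeft_zero_eq_zero, map_zero_right]

theorem opY_pow_eq_zero : opY k a b ^ b = 0 := by
  rw [opY, TensorProduct.map_pow, LinearMap.pow_mulLeft, root_pow_eq_zero,
    LinearMap.mulLeft_zero_eq_zero, map_zero_left]

theorem opX_mul_opY (c : k) : opX c a b * opY k a b = c • (opY k a b * opX c a b) := by
  have hσ : (scaleRoot c).toLinearMap * LinearMap.mulLeft k (root k b) =
      c • (LinearMap.mulLeft k (root k b) * (scaleRoot c).toLinearMap) := by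
    ext r
    simp [scaleRoot_root]
  rw [opX, opY, ← TensorProduct.map_mul, ← TensorProduct.map_mul, hσ, map_smul_left, mul_one,
    one_mul]

theorem opY_pow_mul_opX_pow_apply_one_tmul_one (c : k) (m n : ℕ) :
    (opY k a b ^ m * opX c a b ^ n) (1 ⊗ₜ 1) = (root k b ^ m) ⊗ₜ[k] (root k a ^ n) := by
  have hσ : ((scaleRoot (n := b) c).toLinearMap ^ n) 1 = 1 := by
    rw [Module.End.pow_apply]
    exact Function.iterate_fixed (map_one (scaleRoot c)) n
  simp [opX, opY, ← TensorProduct.map_mul, LinearMap.pow_mulLeft, hσ]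

theorem linearIndependent_opY_pow_mul_opX_pow [Nontrivial k] (c : k) :
    LinearIndependent k fun p : Fin b × Fin a => opY k a b ^ (p.1 : ℕ) * opX c a b ^ (p.2 : ℕ) := by
  have h : (LinearMap.applyₗ (1 ⊗ₜ 1) ∘ fun p : Fin b × Fin a =>
      opY k a b ^ (p.1 : ℕ) * opX c a b ^ (p.2 : ℕ)) = (basis k b).tensorProduct (basis k a) := by
    ext ⟨m, n⟩
    rw [Function.comp_apply, LinearMap.applyₗ_apply_apply, opY_pow_mul_opX_pow_apply_one_tmul_one,
      Module.Basis.tensorProduct_apply, basis_apply, basis_apply]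
  exact .of_comp _ (h ▸ Module.Basis.linearIndependent _)

theorem linearIndependent_pow_mul_pow_of_algHom [Nontrivial k] {A : Type*} [Semiring A]
    [Algebra k A] {c : k} {x y : A} (f : A →ₐ[k] Module.End k (TruncPoly k b ⊗[k] TruncPoly k a))
    (hfx : f x = opX c a b) (hfy : f y = opY k a b) :
    LinearIndependent k fun p : Fin b × Fin a => y ^ (p.1 : ℕ) * x ^ (p.2 : ℕ) :=
  .of_comp f.toLinearMap <| by
    simpa [Function.comp_def, hfx, hfy] using linearIndependent_opY_pow_mul_opX_pow c

end TruncQuantumPlane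

end

theorem RingQuot.adjoin_range_mkAlgHom_ι_eq_top {k ι : Type*} [CommSemiring k]
    (r : FreeAlgebra k ι → FreeAlgebra k ι → Prop) :
    Algebra.adjoin k (Set.range (RingQuot.mkAlgHom k r ∘ FreeAlgebra.ι k)) = ⊤ := by
  rw [Algebra.adjoin_range_eq_range_freeAlgebra_lift, FreeAlgebra.lift_comp_ι, AlgHom.range_eq_top]
  exact RingQuot.mkAlgHom_surjective k r

open TruncQuantumPlane in
theorem BRel.lift_opX_opY_eq {k : Type*} [Field k] {ξ : k} {j : ℕ}
    ⦃u v : FreeAlgebra k (Fin 2)⦄ (h : BRel k ξ j u v) :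
    FreeAlgebra.lift k ![opX (ξ ^ j) 2 4, opY k 2 4] u =
      FreeAlgebra.lift k ![opX (ξ ^ j) 2 4, opY k 2 4] v := by
  cases h <;> simp [opX_pow_eq_zero, opY_pow_eq_zero, opX_mul_opY]

theorem stmt13_general (k : Type*) [Field k]
    (ξ : k) (j : ℕ) :
    Module.finrank k (RingQuot (BRel k ξ j)) = 8 ∧
    ∃ bB : Module.Basis (Fin 4 × Fin 2) k (RingQuot (BRel k ξ j)),
      ∀ p : Fin 4 × Fin 2, bB p =
        RingQuot.mkAlgHom k (BRel k ξ j) (FreeAlgebra.ι k (1 : Fin 2)) ^ (p.1 : ℕ) *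
        RingQuot.mkAlgHom k (BRel k ξ j) (FreeAlgebra.ι k (0 : Fin 2)) ^ (p.2 : ℕ) := by
  set mk := RingQuot.mkAlgHom k (BRel k ξ j)
  set x := mk (FreeAlgebra.ι k 0)
  set y := mk (FreeAlgebra.ι k 1)
  have hx : x ^ 2 = 0 := by simpa using RingQuot.mkAlgHom_rel k (BRel.r1 (ξ := ξ) (j := j))
  have hy : y ^ 4 = 0 := by simpa using RingQuot.mkAlgHom_rel k (BRel.r3 (ξ := ξ) (j := j))
  have hxy : x * y = ξ ^ j • (y * x) := by
    simpa using RingQuot.mkAlgHom_rel k (BRel.r2 (ξ := ξ) (j := j))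
  have hgen : Algebra.adjoin k {x, y} = ⊤ := by
    convert RingQuot.adjoin_range_mkAlgHom_ι_eq_top (BRel k ξ j)
    ext
    simp [Fin.exists_fin_two, eq_comm, x, y, mk]
  let φ := RingQuot.liftAlgHom k
    ⟨FreeAlgebra.lift k ![TruncQuantumPlane.opX (ξ ^ j) 2 4, TruncQuantumPlane.opY k 2 4],
      BRel.lift_opX_opY_eq⟩
  have hli : LinearIndependent k fun p : Fin 4 × Fin 2 => y ^ (p.1 : ℕ) * x ^ (p.2 : ℕ) :=
    TruncQuantumPlane.linearIndependent_pow_mul_pow_of_algHom φ (c := ξ ^ j)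
      (by simp [φ, x, mk]) (by simp [φ, y, mk])
  let bB := Module.Basis.mk hli (span_pow_mul_pow_eq_top hx hy hxy hgen).ge
  exact ⟨by simp [Module.finrank_eq_card_basis bB], bB, Module.Basis.mk_apply _ _⟩

/-- `B = k⟨v₁,v₂⟩/(v₁², v₁v₂ - ξ^j v₂v₁, v₂⁴)` has dimension 8 over `k`, with
basis `{v₂^m v₁^n : 0 ≤ m ≤ 3, 0 ≤ n ≤ 1}`. -/
theorem stmt13 (k : Type*) [Field k] [IsAlgClosed k] [CharZero k]
    (ξ : k) (hξ : IsPrimitiveRoot ξ 4) (j : ℕ) (hj : j = 1 ∨ j = 3) :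
    Module.finrank k (RingQuot (BRel k ξ j)) = 8 ∧
    ∃ bB : Module.Basis (Fin 4 × Fin 2) k (RingQuot (BRel k ξ j)),
      ∀ p : Fin 4 × Fin 2, bB p =
        RingQuot.mkAlgHom k (BRel k ξ j) (FreeAlgebra.ι k (1 : Fin 2)) ^ (p.1 : ℕ) *
        RingQuot.mkAlgHom k (BRel k ξ j) (FreeAlgebra.ι k (0 : Fin 2)) ^ (p.2 : ℕ) :=
  stmt13_general k ξ j
end

section
/- Let B be the k-algebra k⟨v_1, v_2⟩/(v_1^4, v_1v_2 + λ v_2v_1, v_1^2 + 2λ v_2^2) where λ ∈ {1, -1} and k has characteristic zero. Then B has dimension 8, with basis {v_1^m v_2^n : 0 ≤ m ≤ 3, 0 ≤ n ≤ 1}. -/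
/- Relations of the Nichols algebra
`B = k⟨v₁,v₂⟩/(v₁⁴, v₁v₂ + λv₂v₁, v₁² + 2λv₂²)`,
with generators v₁ (= 0) and v₂ (= 1). -/
inductive BRel' (k : Type*) [Field k] (lam : k) :
    FreeAlgebra k (Fin 2) → FreeAlgebra k (Fin 2) → Prop
  | r1 : BRel' k lam ((FreeAlgebra.ι k (0 : Fin 2)) ^ 4) 0
  | r2 : BRel' k lam (FreeAlgebra.ι k (0 : Fin 2) * FreeAlgebra.ι k (1 : Fin 2))
      (-(lam • (FreeAlgebra.ι k (1 : Fin 2) * FreeAlgebra.ι k (0 : Fin 2))))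
  | r3 : BRel' k lam ((FreeAlgebra.ι k (0 : Fin 2)) ^ 2)
      (-((2 * lam) • ((FreeAlgebra.ι k (1 : Fin 2)) ^ 2)))

/-! The relations let one move every `v₂` to the right of every `v₁` (`v₂ v₁ = -λ v₁ v₂`, since
`λ² = 1`) and turn `v₂²` into `-(λ/2) v₁²`, so the eight words `v₁^m v₂^n` with `m ≤ 3`, `n ≤ 1`
span `B`. For independence, over `k[t]/(t⁴)` the matrices `V₁ = diag(t, -λt)` and
`V₂ = [[0, 1], [-(λ/2) t², 0]]` satisfy the defining relations, and the first row of `V₁^m V₂^n`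
is `t^m` in column `n`; as `1, t, t², t³` are independent, so are the eight words. -/

open Set Submodule Matrix

open Polynomial in
theorem AdjoinRoot.root_X_pow_pow_self {S : Type*} [CommRing S] (n : ℕ) :
    root (X ^ n : S[X]) ^ n = 0 := by
  simpa using AdjoinRoot.eval₂_root (X ^ n : S[X])

open Polynomial in
theorem AdjoinRoot.linearIndependent_root_X_pow_pow {S : Type*} [CommRing S] [Nontrivial S]
    (n : ℕ) :
    LinearIndependent S fun i : Fin n => root (X ^ n : S[X]) ^ (i : ℕ) := by
  have h := (powerBasis' (monic_X_pow (R := S) n)).basis.linearIndependent.comp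
    (Fin.cast (natDegree_X_pow n).symm) (Fin.cast_injective _)
  rw [PowerBasis.coe_basis] at h
  exact h

theorem Submodule.eq_top_of_one_mem_of_mul_mem {R A : Type*} [CommSemiring R] [Semiring A]
    [Algebra R A] {s : Set A} (hs : Algebra.adjoin R s = ⊤) {S : Submodule R A}
    (h1 : 1 ∈ S) (hmul : ∀ a ∈ s, ∀ x ∈ S, a * x ∈ S) : S = ⊤ := by
  suffices h : ∀ a ∈ Algebra.adjoin R s, ∀ x ∈ S, a * x ∈ S from
    eq_top_iff.2 fun a _ => by simpa using h a (hs ▸ Algebra.mem_top) 1 h1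
  intro a ha
  induction ha using Algebra.adjoin_induction with
  | mem a ha => exact hmul a ha
  | algebraMap r => exact fun x hx => by rw [← Algebra.smul_def]; exact S.smul_mem r hx
  | add a b _ _ ha hb => exact fun x hx => by rw [add_mul]; exact S.add_mem (ha x hx) (hb x hx)
  | mul a b _ _ ha hb => exact fun x hx => by rw [mul_assoc]; exact ha _ (hb x hx)

theorem RingQuot.adjoin_range_mkAlgHom_comp_ι {R X : Type*} [CommSemiring R]
    (r : FreeAlgebra R X → FreeAlgebra R X → Prop) :
    Algebra.adjoin R (range (RingQuot.mkAlgHom R r ∘ FreeAlgebra.ι R)) = ⊤ := by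
  rw [range_comp, Algebra.adjoin_image, FreeAlgebra.adjoin_range_ι, Algebra.map_top,
    AlgHom.range_eq_top]
  exact RingQuot.mkAlgHom_surjective R r

namespace BRel'

variable {k : Type*} [Field k] {lam : k}

local notation "v₁" => RingQuot.mkAlgHom k (BRel' k lam) (FreeAlgebra.ι k (0 : Fin 2))
local notation "v₂" => RingQuot.mkAlgHom k (BRel' k lam) (FreeAlgebra.ι k (1 : Fin 2))

theorem v₁_pow_four : v₁ ^ 4 = 0 := by
  simpa using RingQuot.mkAlgHom_rel k (r1 (k := k) (lam := lam))

theorem v₁_mul_v₂ : v₁ * v₂ = -lam • (v₂ * v₁) := by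
  have h := RingQuot.mkAlgHom_rel k (r2 (k := k) (lam := lam))
  simp only [map_mul, map_neg, map_smul] at h
  exact h.trans (neg_smul lam (v₂ * v₁)).symm

theorem v₁_sq : v₁ ^ 2 = -(2 * lam) • v₂ ^ 2 := by
  have h := RingQuot.mkAlgHom_rel k (r3 (k := k) (lam := lam))
  simp only [map_pow, map_neg, map_smul] at h
  exact h.trans (neg_smul (2 * lam) (v₂ ^ 2)).symm

theorem v₂_mul_v₁ (hlam : lam ^ 2 = 1) : v₂ * v₁ = -lam • (v₁ * v₂) := by
  rw [v₁_mul_v₂, smul_smul, neg_mul_neg, ← sq, hlam, one_smul]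

theorem v₂_mul_v₁_pow (hlam : lam ^ 2 = 1) (m : ℕ) :
    v₂ * v₁ ^ m = (-lam) ^ m • (v₁ ^ m * v₂) := by
  induction m with
  | zero => simp
  | succ m ih =>
    rw [pow_succ, ← mul_assoc, ih, smul_mul_assoc, mul_assoc, v₂_mul_v₁ hlam, mul_smul_comm,
      smul_smul, ← mul_assoc, ← pow_succ, ← pow_succ]

theorem v₂_sq (hlam : lam ^ 2 = 1) (h2 : (2 : k) ≠ 0) : v₂ ^ 2 = -(lam / 2) • v₁ ^ 2 := by
  rw [v₁_sq, smul_smul, show -(lam / 2) * -(2 * lam) = lam ^ 2 by field_simp, hlam, one_smul]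

theorem v₂_mul_v₁_pow_mul_v₂ (hlam : lam ^ 2 = 1) (h2 : (2 : k) ≠ 0) (m : ℕ) :
    v₂ * (v₁ ^ m * v₂) = ((-lam) ^ m * -(lam / 2)) • v₁ ^ (m + 2) := by
  rw [← mul_assoc, v₂_mul_v₁_pow hlam, smul_mul_assoc, mul_assoc, ← sq, v₂_sq hlam h2,
    mul_smul_comm, smul_smul, ← pow_add]

variable (k lam) in
noncomputable def monomial (p : Fin 4 × Fin 2) : RingQuot (BRel' k lam) :=
  v₁ ^ (p.1 : ℕ) * v₂ ^ (p.2 : ℕ)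

theorem v₁_pow_mul_v₂_pow_mem_span (m : ℕ) {n : ℕ} (hn : n ≤ 1) :
    v₁ ^ m * v₂ ^ n ∈ span k (range (monomial k lam)) := by
  obtain hm | hm := lt_or_ge m 4
  · exact subset_span ⟨(⟨m, hm⟩, ⟨n, by omega⟩), rfl⟩
  · rw [← Nat.add_sub_cancel' hm, pow_add, v₁_pow_four, zero_mul, zero_mul]
    exact zero_mem _

theorem span_range_monomial (hlam : lam ^ 2 = 1) (h2 : (2 : k) ≠ 0) :
    span k (range (monomial k lam)) = ⊤ := by
  refine eq_top_of_one_mem_of_mul_mem (RingQuot.adjoin_range_mkAlgHom_comp_ι _)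
    (by simpa using v₁_pow_mul_v₂_pow_mem_span 0 zero_le_one) ?_
  rintro _ ⟨i, rfl⟩ x hx
  induction hx using span_induction with
  | mem _ hx =>
    obtain ⟨⟨m, n⟩, rfl⟩ := hx
    fin_cases i
    · simpa [monomial, ← mul_assoc, ← pow_succ'] using
        v₁_pow_mul_v₂_pow_mem_span (m + 1) n.is_le
    · fin_cases n
      · simpa [monomial, v₂_mul_v₁_pow hlam] using
          smul_mem _ _ (v₁_pow_mul_v₂_pow_mem_span m le_rfl)
      · simpa [monomial, v₂_mul_v₁_pow_mul_v₂ hlam h2] using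
          smul_mem _ _ (v₁_pow_mul_v₂_pow_mem_span (m + 2) zero_le_one)
  | zero => simp
  | add x y _ _ hx hy => rw [mul_add]; exact add_mem hx hy
  | smul c x _ hx => rw [mul_smul_comm]; exact smul_mem _ c hx

section Representation

variable {R : Type*} [CommRing R] [Algebra k R]

variable (lam) in
def repV₁ (t : R) : Matrix (Fin 2) (Fin 2) R := diagonal ![t, -lam • t]

variable (lam) in
def repV₂ (t : R) : Matrix (Fin 2) (Fin 2) R := !![0, 1; -(lam / 2) • t ^ 2, 0]

theorem repV₁_pow_four {t : R} (ht : t ^ 4 = 0) : repV₁ lam t ^ 4 = 0 := by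
  ext i j; fin_cases i <;> fin_cases j <;> simp [-neg_smul, repV₁, diagonal_pow, smul_pow, ht]

theorem repV₁_mul_repV₂ (hlam : lam ^ 2 = 1) (t : R) :
    repV₁ lam t * repV₂ lam t = -lam • (repV₂ lam t * repV₁ lam t) := by
  have hlam' : lam * lam = 1 := by rw [← sq, hlam]
  ext i j; fin_cases i <;> fin_cases j <;>
    simp [repV₁, repV₂, diagonal_fin_two, smul_smul, hlam', pow_succ, mul_assoc]

theorem repV₁_sq (hlam : lam ^ 2 = 1) (h2 : (2 : k) ≠ 0) (t : R) :
    repV₁ lam t ^ 2 = -(2 * lam) • repV₂ lam t ^ 2 := by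
  have hlam' : lam * lam = 1 := by rw [← sq, hlam]
  have hhalf : 2 * lam * (lam / 2) = 1 := by field_simp; linear_combination hlam
  ext i j; fin_cases i <;> fin_cases j <;>
    simp [repV₁, repV₂, diagonal_fin_two, sq, smul_smul, hlam', hhalf]

theorem repV₁_pow_mul_repV₂_pow_apply_zero (t : R) (m : ℕ) (n : Fin 2) :
    (repV₁ lam t ^ m * repV₂ lam t ^ (n : ℕ)) 0 = Pi.single n (t ^ m) := by
  ext j; fin_cases n <;> fin_cases j <;> simp [repV₁, repV₂, diagonal_pow, diagonal_mul]

variable (lam) in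
noncomputable def matrixRep (hlam : lam ^ 2 = 1) (h2 : (2 : k) ≠ 0) {t : R} (ht : t ^ 4 = 0) :
    RingQuot (BRel' k lam) →ₐ[k] Matrix (Fin 2) (Fin 2) R :=
  RingQuot.liftAlgHom k ⟨FreeAlgebra.lift k ![repV₁ lam t, repV₂ lam t], fun _ _ h => by
    cases h
    · simpa using repV₁_pow_four ht
    · simpa using repV₁_mul_repV₂ hlam t
    · simpa using repV₁_sq hlam h2 t⟩

theorem matrixRep_v₁ (hlam : lam ^ 2 = 1) (h2 : (2 : k) ≠ 0) {t : R} (ht : t ^ 4 = 0) :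
    matrixRep lam hlam h2 ht v₁ = repV₁ lam t := by
  simp [matrixRep]

theorem matrixRep_v₂ (hlam : lam ^ 2 = 1) (h2 : (2 : k) ≠ 0) {t : R} (ht : t ^ 4 = 0) :
    matrixRep lam hlam h2 ht v₂ = repV₂ lam t := by
  simp [matrixRep]

theorem linearIndependent_monomial (hlam : lam ^ 2 = 1) (h2 : (2 : k) ≠ 0) {t : R}
    (ht : t ^ 4 = 0) (hind : LinearIndependent k fun i : Fin 4 => t ^ (i : ℕ)) :
    LinearIndependent k (monomial k lam) := by
  let Ψ : RingQuot (BRel' k lam) →ₗ[k] Fin 2 → R :=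
    LinearMap.proj 0 ∘ₗ (matrixRep lam hlam h2 ht).toLinearMap
  have hΨ : Ψ ∘ monomial k lam = fun p => Pi.single p.2 (t ^ (p.1 : ℕ)) := by
    funext p
    change matrixRep lam hlam h2 ht (monomial k lam p) 0 = _
    rw [monomial, map_mul, map_pow, map_pow, matrixRep_v₁, matrixRep_v₂]
    exact repV₁_pow_mul_repV₂_pow_apply_zero (lam := lam) t _ _
  refine LinearIndependent.of_comp Ψ ?_
  rw [hΨ]
  refine (linearIndependent_equiv' ((Equiv.sigmaEquivProd _ _).trans (Equiv.prodComm _ _)) ?_).1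
    (Pi.linearIndependent_single (fun (_ : Fin 2) (i : Fin 4) => t ^ (i : ℕ)) fun _ => hind)
  rfl

end Representation

variable (k lam) in
noncomputable def monomialBasis (hlam : lam ^ 2 = 1) (h2 : (2 : k) ≠ 0) :
    Module.Basis (Fin 4 × Fin 2) k (RingQuot (BRel' k lam)) :=
  .mk (linearIndependent_monomial hlam h2 (AdjoinRoot.root_X_pow_pow_self 4)
      (AdjoinRoot.linearIndependent_root_X_pow_pow 4))
    (span_range_monomial hlam h2).ge

end BRel'

/-- `B = k⟨v₁,v₂⟩/(v₁⁴, v₁v₂ + λv₂v₁, v₁² + 2λv₂²)` with `λ = ±1` has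
dimension 8, with basis `{v₁^m v₂^n : 0 ≤ m ≤ 3, 0 ≤ n ≤ 1}`. -/
theorem stmt14 (k : Type*) [Field k] [CharZero k]
    (lam : k) (hlam : lam = 1 ∨ lam = -1) :
    Module.finrank k (RingQuot (BRel' k lam)) = 8 ∧
    ∃ bB : Module.Basis (Fin 4 × Fin 2) k (RingQuot (BRel' k lam)),
      ∀ p : Fin 4 × Fin 2, bB p =
        RingQuot.mkAlgHom k (BRel' k lam) (FreeAlgebra.ι k (0 : Fin 2)) ^ (p.1 : ℕ) *
        RingQuot.mkAlgHom k (BRel' k lam) (FreeAlgebra.ι k (1 : Fin 2)) ^ (p.2 : ℕ) := by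
  have hlam_sq : lam ^ 2 = 1 := by rcases hlam with rfl | rfl <;> norm_num
  let b := BRel'.monomialBasis k lam hlam_sq two_ne_zero
  exact ⟨by simp [Module.finrank_eq_card_basis b], b, fun p => Module.Basis.mk_apply _ _ p⟩
end
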